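/- arXiv:math/0007168 — 7 statements merged into one kernel-verified Lean document; each statement's English description precedes it below -/
import Mathlib

section
/- Under the transformed closed-loop system assumptions, the Lyapunov function V is differentiable on [0,∞) and for every t ≥ 0 it satisfies V′(t) ≤ −Σ_{i=1}^n c̄_i z_i(t)²/ψ̄_i − (1/2) Σ_{i=1}^n Σ_{j=1}^R σ_{i,j} ‖Φ_{i,j}(t)‖²/γ_{i,j} + W_d. -/
/-- Telescoping auxiliary lemma. -/
lemma tele_aux (f : ℕ → ℝ) (h0 : f 0 = 0) : ∀ m : ℕ,
    ∑ i ∈ Finset.Icc 1 m, (f i * f (i+1) - f i * f (i-1)) = f m * f (m+1)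
  | 0 => by simp [h0]
  | (m+1) => by
      rw [Finset.sum_Icc_succ_top (Nat.le_add_left 1 m), tele_aux f h0 m]
      simp
      ring

set_option maxHeartbeats 1000000 in
/-- Under the transformed closed-loop system assumptions of Theorem 1,
the Lyapunov function `V` is differentiable on `[0,∞)` and its derivative satisfies
`V′(t) ≤ −Σᵢ c̄ᵢ zᵢ(t)²/ψ̄ᵢ − (1/2) Σᵢ Σⱼ σᵢⱼ ‖Φᵢⱼ(t)‖²/γᵢⱼ + W_d` for all `t ≥ 0`. -/
theorem lyapunov_derivative_bound
    (n R : ℕ) (hn : 1 ≤ n) (hR : 1 ≤ R)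
    (N : ℕ → ℕ → ℕ)
    (z z' : ℕ → ℝ → ℝ)
    (ψ ψ' : ℕ → ℝ → ℝ)
    (Φ Φ' : (i : ℕ) → (j : ℕ) → ℝ → EuclideanSpace ℝ (Fin (N i j)))
    (ρ : ℕ → ℝ → ℝ)
    (ζ : (i : ℕ) → (j : ℕ) → ℝ → EuclideanSpace ℝ (Fin (N i j)))
    (δ : ℕ → ℝ → ℝ)
    (ψl ψu ψd d k c : ℕ → ℝ)
    (γ σ : ℕ → ℕ → ℝ)
    (θ : (i : ℕ) → (j : ℕ) → EuclideanSpace ℝ (Fin (N i j)))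
    (hψl : ∀ i ∈ Finset.Icc 1 n, 0 < ψl i)
    (hψb : ∀ i ∈ Finset.Icc 1 n, ∀ t : ℝ, 0 ≤ t → ψl i ≤ ψ i t ∧ ψ i t ≤ ψu i)
    (hψd : ∀ i ∈ Finset.Icc 1 n, ∀ t : ℝ, 0 ≤ t → |ψ' i t| ≤ ψd i)
    (hδ : ∀ i ∈ Finset.Icc 1 n, ∀ t : ℝ, 0 ≤ t → |δ i t| ≤ d i)
    (hk : ∀ i ∈ Finset.Icc 1 n, 0 < k i)
    (hγ : ∀ i ∈ Finset.Icc 1 n, ∀ j ∈ Finset.Icc 1 R, 0 < γ i j)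
    (hσ : ∀ i ∈ Finset.Icc 1 n, ∀ j ∈ Finset.Icc 1 R, 0 < σ i j)
    (hc : ∀ i ∈ Finset.Icc 1 n, ψd i / (2 * ψl i) < c i)
    (hzdiff : ∀ i ∈ Finset.Icc 1 n, ∀ t : ℝ, 0 ≤ t → HasDerivAt (z i) (z' i t) t)
    (hψdiff : ∀ i ∈ Finset.Icc 1 n, ∀ t : ℝ, 0 ≤ t → HasDerivAt (ψ i) (ψ' i t) t)
    (hΦdiff : ∀ i ∈ Finset.Icc 1 n, ∀ j ∈ Finset.Icc 1 R, ∀ t : ℝ, 0 ≤ t →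
      HasDerivAt (Φ i j) (Φ' i j t) t)
    (hzzero : ∀ t : ℝ, z 0 t = 0)
    (hztop : ∀ t : ℝ, z (n + 1) t = 0)
    (hdyn : ∀ i ∈ Finset.Icc 1 n, ∀ t : ℝ, 0 ≤ t →
      z' i t = -(c i) * z i t + ψ i t * z (i + 1) t
        + ψ i t * ((∑ j ∈ Finset.Icc 1 R, ρ j t * (inner ℝ (Φ i j t) (ζ i j t) : ℝ)) - δ i t)
        + ψ i t * (-(k i) * z i t - z (i - 1) t))
    (hadapt : ∀ i ∈ Finset.Icc 1 n, ∀ j ∈ Finset.Icc 1 R, ∀ t : ℝ, 0 ≤ t →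
      Φ' i j t = (-(ρ j t) * γ i j * z i t) • ζ i j t - σ i j • (Φ i j t + θ i j))
    (V : ℝ → ℝ)
    (hV : ∀ t : ℝ, V t = (1 / 2) * ∑ i ∈ Finset.Icc 1 n, (z i t) ^ 2 / ψ i t
      + (1 / 2) * ∑ i ∈ Finset.Icc 1 n, ∑ j ∈ Finset.Icc 1 R, ‖Φ i j t‖ ^ 2 / γ i j)
    (Wd : ℝ)
    (hWd : Wd = ∑ i ∈ Finset.Icc 1 n, (d i) ^ 2 / (4 * k i)
      + (1 / 2) * ∑ i ∈ Finset.Icc 1 n, ∑ j ∈ Finset.Icc 1 R, σ i j * ‖θ i j‖ ^ 2 / γ i j) :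
    ∃ V' : ℝ → ℝ, ∀ t : ℝ, 0 ≤ t → HasDerivAt V (V' t) t ∧
      V' t ≤ -(∑ i ∈ Finset.Icc 1 n, (c i - ψd i / (2 * ψl i)) * (z i t) ^ 2 / ψu i)
        - (1 / 2) * ∑ i ∈ Finset.Icc 1 n, ∑ j ∈ Finset.Icc 1 R, σ i j * ‖Φ i j t‖ ^ 2 / γ i j
        + Wd := by
  subst hWd
  set I := Finset.Icc 1 n with hI
  set J := Finset.Icc 1 R with hJ
  refine ⟨fun t => (∑ i ∈ I, (z i t * z' i t / ψ i t - z i t ^ 2 * ψ' i t / (2 * ψ i t ^ 2)))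
    + ∑ i ∈ I, ∑ j ∈ J, (inner ℝ (Φ i j t) (Φ' i j t) : ℝ) / γ i j, fun t ht => ?_⟩
  have hψpos : ∀ i ∈ I, 0 < ψ i t := fun i hi => lt_of_lt_of_le (hψl i hi) (hψb i hi t ht).1
  have hψne : ∀ i ∈ I, ψ i t ≠ 0 := fun i hi => ne_of_gt (hψpos i hi)
  constructor
  · -- differentiability
    have h1 : HasDerivAt (fun s => (1/2 : ℝ) * ∑ i ∈ I, (z i s) ^ 2 / ψ i s)
        ((1/2 : ℝ) * ∑ i ∈ I, (((2:ℕ) : ℝ) * z i t ^ (2-1) * z' i t * ψ i t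
            - z i t ^ 2 * ψ' i t) / ψ i t ^ 2) t := by
      exact (HasDerivAt.fun_sum fun i hi =>
        ((hzdiff i hi t ht).fun_pow 2).fun_div (hψdiff i hi t ht) (hψne i hi)).const_mul (1/2 : ℝ)
    have h2 : HasDerivAt (fun s => (1/2 : ℝ) * ∑ i ∈ I, ∑ j ∈ J, ‖Φ i j s‖ ^ 2 / γ i j)
        ((1/2 : ℝ) * ∑ i ∈ I, ∑ j ∈ J,
          ((inner ℝ (Φ i j t) (Φ' i j t) : ℝ) + (inner ℝ (Φ' i j t) (Φ i j t) : ℝ)) / γ i j) t := by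
      have heq : (fun s => (1/2 : ℝ) * ∑ i ∈ I, ∑ j ∈ J, ‖Φ i j s‖ ^ 2 / γ i j)
          = fun s => (1/2 : ℝ) * ∑ i ∈ I, ∑ j ∈ J,
              (inner ℝ (Φ i j s) (Φ i j s) : ℝ) / γ i j := by
        funext s
        simp only [← real_inner_self_eq_norm_sq]
      rw [heq]
      exact (HasDerivAt.fun_sum fun i hi => HasDerivAt.fun_sum fun j hj =>
        ((hΦdiff i hi j hj t ht).inner ℝ (hΦdiff i hi j hj t ht)).div_const (γ i j)).const_mul
        (1/2 : ℝ)
    have hVF : V = fun s => (1/2 : ℝ) * ∑ i ∈ I, (z i s) ^ 2 / ψ i s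
        + (1/2 : ℝ) * ∑ i ∈ I, ∑ j ∈ J, ‖Φ i j s‖ ^ 2 / γ i j := funext hV
    rw [hVF]
    beta_reduce
    refine HasDerivAt.congr_deriv (h1.add h2) ?_
    symm
    rw [Finset.mul_sum, Finset.mul_sum]
    congr 1
    · refine Finset.sum_congr rfl fun i hi => ?_
      have := hψne i hi
      field_simp
      ring
    · refine Finset.sum_congr rfl fun i hi => ?_
      rw [Finset.mul_sum]
      refine Finset.sum_congr rfl fun j hj => ?_
      have hγne : γ i j ≠ 0 := (hγ i hi j hj).ne'
      rw [real_inner_comm (Φ' i j t) (Φ i j t)]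
      field_simp
      all_goals ring
  · -- the bound
    beta_reduce
    set P : ℕ → ℝ := fun i => ∑ j ∈ J, ρ j t * (inner ℝ (Φ i j t) (ζ i j t) : ℝ) with hP
    set E : ℕ → ℝ := fun i => -(c i) * z i t ^ 2 / ψ i t - z i t ^ 2 * ψ' i t / (2 * ψ i t ^ 2)
        - k i * z i t ^ 2 - δ i t * z i t with hE
    set G : ℕ → ℕ → ℝ := fun i j => σ i j / γ i j *
        (‖Φ i j t‖ ^ 2 + (inner ℝ (Φ i j t) (θ i j) : ℝ)) with hG
    have hA : ∀ i ∈ I, z i t * z' i t / ψ i t - z i t ^ 2 * ψ' i t / (2 * ψ i t ^ 2)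
        = E i + (z i t * z (i+1) t - z i t * z (i-1) t) + z i t * P i := by
      intro i hi
      rw [hdyn i hi t ht]
      have := hψne i hi
      simp only [hE, hP]
      field_simp
      ring
    have hB : ∀ i ∈ I, ∑ j ∈ J, (inner ℝ (Φ i j t) (Φ' i j t) : ℝ) / γ i j
        = -(z i t * P i) - ∑ j ∈ J, G i j := by
      intro i hi
      have hBj : ∀ j ∈ J, (inner ℝ (Φ i j t) (Φ' i j t) : ℝ) / γ i j
          = -(z i t * (ρ j t * (inner ℝ (Φ i j t) (ζ i j t) : ℝ))) - G i j := by
        intro j hj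
        rw [hadapt i hi j hj t ht]
        have hγne : γ i j ≠ 0 := (hγ i hi j hj).ne'
        simp only [hG, inner_sub_right, inner_add_right, real_inner_smul_right,
          real_inner_self_eq_norm_sq]
        field_simp
      rw [Finset.sum_congr rfl hBj, Finset.sum_sub_distrib]
      simp only [hP]
      rw [Finset.sum_neg_distrib, Finset.mul_sum]
    have htele : ∑ i ∈ I, (z i t * z (i+1) t - z i t * z (i-1) t) = 0 := by
      have h := tele_aux (fun m => z m t) (hzzero t) n
      beta_reduce at h
      rw [hI, h, hztop t, mul_zero]
    have key : (∑ i ∈ I, (z i t * z' i t / ψ i t - z i t ^ 2 * ψ' i t / (2 * ψ i t ^ 2)))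
        + ∑ i ∈ I, ∑ j ∈ J, (inner ℝ (Φ i j t) (Φ' i j t) : ℝ) / γ i j
        = ∑ i ∈ I, E i - ∑ i ∈ I, ∑ j ∈ J, G i j := by
      rw [Finset.sum_congr rfl hA, Finset.sum_congr rfl hB]
      have h' := htele
      rw [Finset.sum_sub_distrib] at h'
      simp only [Finset.sum_add_distrib, Finset.sum_sub_distrib, Finset.sum_neg_distrib]
      linarith [h']
    rw [key]
    -- pointwise bounds
    have hEb : ∀ i ∈ I, E i ≤ -((c i - ψd i / (2 * ψl i)) * z i t ^ 2 / ψu i)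
        + d i ^ 2 / (4 * k i) := by
      intro i hi
      obtain ⟨hl, hu⟩ := hψb i hi t ht
      have ha : 0 < ψ i t := hψpos i hi
      have hψli := hψl i hi
      have habs := abs_le.mp (hψd i hi t ht)
      have hdnn : 0 ≤ ψd i := le_trans (abs_nonneg _) (hψd i hi t ht)
      have hki := hk i hi
      have hδi := abs_le.mp (hδ i hi t ht)
      have hdi : 0 ≤ d i := le_trans (abs_nonneg _) (hδ i hi t ht)
      have hci := hc i hi
      have hx2 : (0:ℝ) ≤ z i t ^ 2 := sq_nonneg _
      have hψu : 0 < ψu i := lt_of_lt_of_le ha hu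
      have hane : ψ i t ≠ 0 := ha.ne'
      have hlne : ψl i ≠ 0 := hψli.ne'
      have s12 : -(z i t ^ 2 * ψd i / (2 * ψl i * ψ i t))
          ≤ z i t ^ 2 * ψ' i t / (2 * ψ i t ^ 2) := by
        have h1 : 0 ≤ z i t ^ 2 * (ψ' i t * ψl i + ψd i * ψ i t) := by
          have e1 : -(ψd i * ψl i) ≤ ψ' i t * ψl i :=
            by nlinarith [mul_le_mul_of_nonneg_right habs.1 hψli.le]
          have e2 : ψd i * ψl i ≤ ψd i * ψ i t := mul_le_mul_of_nonneg_left hl hdnn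
          nlinarith
        have heq2 : z i t ^ 2 * ψ' i t / (2 * ψ i t ^ 2) + z i t ^ 2 * ψd i / (2 * ψl i * ψ i t)
            = z i t ^ 2 * (ψ' i t * ψl i + ψd i * ψ i t) / (2 * ψl i * ψ i t ^ 2) := by
          field_simp
        have h2 : 0 ≤ z i t ^ 2 * (ψ' i t * ψl i + ψd i * ψ i t) / (2 * ψl i * ψ i t ^ 2) :=
          div_nonneg h1 (by nlinarith [pow_pos ha 2])
        linarith [heq2 ▸ h2]
      have s3 : -(c i) * z i t ^ 2 / ψ i t + z i t ^ 2 * ψd i / (2 * ψl i * ψ i t)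
          = -((c i - ψd i / (2 * ψl i)) * z i t ^ 2 / ψ i t) := by
        field_simp
        ring
      have s4 : -((c i - ψd i / (2 * ψl i)) * z i t ^ 2 / ψ i t)
          ≤ -((c i - ψd i / (2 * ψl i)) * z i t ^ 2 / ψu i) := by
        have hcq : 0 ≤ c i - ψd i / (2 * ψl i) := by linarith
        have : (c i - ψd i / (2 * ψl i)) * z i t ^ 2 / ψu i
            ≤ (c i - ψd i / (2 * ψl i)) * z i t ^ 2 / ψ i t := by
          rw [div_le_div_iff₀ hψu ha]
          nlinarith [mul_nonneg hcq hx2]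
        linarith
      have c2 : -(k i * z i t ^ 2) - δ i t * z i t ≤ d i ^ 2 / (4 * k i) := by
        rw [le_div_iff₀ (by linarith : (0:ℝ) < 4 * k i)]
        have hd2 : δ i t ^ 2 ≤ d i ^ 2 := by nlinarith
        nlinarith [sq_nonneg (2 * k i * z i t + δ i t)]
      simp only [hE]
      linarith
    have hGb : ∀ i ∈ I, ∀ j ∈ J,
        σ i j * ‖Φ i j t‖ ^ 2 / γ i j / 2 - σ i j * ‖θ i j‖ ^ 2 / γ i j / 2 ≤ G i j := by
      intro i hi j hj
      have hγp := hγ i hi j hj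
      have hσp := hσ i hi j hj
      have hip : -(‖Φ i j t‖ * ‖θ i j‖) ≤ (inner ℝ (Φ i j t) (θ i j) : ℝ) :=
        (abs_le.mp (abs_real_inner_le_norm (Φ i j t) (θ i j))).1
      have hX : ‖Φ i j t‖ ^ 2 / 2 - ‖θ i j‖ ^ 2 / 2
          ≤ ‖Φ i j t‖ ^ 2 + (inner ℝ (Φ i j t) (θ i j) : ℝ) := by
        nlinarith [sq_nonneg (‖Φ i j t‖ - ‖θ i j‖)]
      have hsg : 0 ≤ σ i j / γ i j := (div_pos hσp hγp).le
      calc σ i j * ‖Φ i j t‖ ^ 2 / γ i j / 2 - σ i j * ‖θ i j‖ ^ 2 / γ i j / 2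
          = σ i j / γ i j * (‖Φ i j t‖ ^ 2 / 2 - ‖θ i j‖ ^ 2 / 2) := by
            field_simp
        _ ≤ σ i j / γ i j * (‖Φ i j t‖ ^ 2 + (inner ℝ (Φ i j t) (θ i j) : ℝ)) :=
            mul_le_mul_of_nonneg_left hX hsg
        _ = G i j := by rw [hG]
    have h5 : ∑ i ∈ I, E i ≤ ∑ i ∈ I, (-((c i - ψd i / (2 * ψl i)) * z i t ^ 2 / ψu i)
        + d i ^ 2 / (4 * k i)) := Finset.sum_le_sum hEb
    have h6 : ∑ i ∈ I, ∑ j ∈ J,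
        (σ i j * ‖Φ i j t‖ ^ 2 / γ i j / 2 - σ i j * ‖θ i j‖ ^ 2 / γ i j / 2)
        ≤ ∑ i ∈ I, ∑ j ∈ J, G i j :=
      Finset.sum_le_sum fun i hi => Finset.sum_le_sum (hGb i hi)
    have e1 : ∑ i ∈ I, (-((c i - ψd i / (2 * ψl i)) * z i t ^ 2 / ψu i) + d i ^ 2 / (4 * k i))
        = -(∑ i ∈ I, (c i - ψd i / (2 * ψl i)) * z i t ^ 2 / ψu i)
          + ∑ i ∈ I, d i ^ 2 / (4 * k i) := by
      rw [Finset.sum_add_distrib, Finset.sum_neg_distrib]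
    have e2 : ∑ i ∈ I, ∑ j ∈ J,
        (σ i j * ‖Φ i j t‖ ^ 2 / γ i j / 2 - σ i j * ‖θ i j‖ ^ 2 / γ i j / 2)
        = (∑ i ∈ I, ∑ j ∈ J, σ i j * ‖Φ i j t‖ ^ 2 / γ i j) / 2
          - (∑ i ∈ I, ∑ j ∈ J, σ i j * ‖θ i j‖ ^ 2 / γ i j) / 2 := by
      simp only [Finset.sum_sub_distrib, ← Finset.sum_div]
    linarith
end

section
/- Under the transformed closed-loop system assumptions, for all t ≥ 0 one has 0 ≤ V(t) ≤ W_d/β_d + (V(0) − W_d/β_d) e^{−β_d t}. -/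
set_option maxHeartbeats 1000000


/-- Under the transformed closed-loop system assumptions, for all `t ≥ 0` one has `0 ≤ V(t) ≤ W_d/β_d + (V(0) − W_d/β_d) e^{−β_d t}`. -/
theorem lyapunov_exponential_bound
    (n R : ℕ) (hn : 1 ≤ n) (hR : 1 ≤ R)
    (N : ℕ → ℕ → ℕ)
    (z z' : ℕ → ℝ → ℝ)
    (ψ ψ' : ℕ → ℝ → ℝ)
    (Φ Φ' : (i : ℕ) → (j : ℕ) → ℝ → EuclideanSpace ℝ (Fin (N i j)))
    (ρ : ℕ → ℝ → ℝ)
    (ζ : (i : ℕ) → (j : ℕ) → ℝ → EuclideanSpace ℝ (Fin (N i j)))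
    (δ : ℕ → ℝ → ℝ)
    (ψl ψu ψd d k c : ℕ → ℝ)
    (γ σ : ℕ → ℕ → ℝ)
    (θ : (i : ℕ) → (j : ℕ) → EuclideanSpace ℝ (Fin (N i j)))
    (hψl : ∀ i ∈ Finset.Icc 1 n, 0 < ψl i)
    (hψb : ∀ i ∈ Finset.Icc 1 n, ∀ t : ℝ, 0 ≤ t → ψl i ≤ ψ i t ∧ ψ i t ≤ ψu i)
    (hψd : ∀ i ∈ Finset.Icc 1 n, ∀ t : ℝ, 0 ≤ t → |ψ' i t| ≤ ψd i)
    (hδ : ∀ i ∈ Finset.Icc 1 n, ∀ t : ℝ, 0 ≤ t → |δ i t| ≤ d i)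
    (hk : ∀ i ∈ Finset.Icc 1 n, 0 < k i)
    (hγ : ∀ i ∈ Finset.Icc 1 n, ∀ j ∈ Finset.Icc 1 R, 0 < γ i j)
    (hσ : ∀ i ∈ Finset.Icc 1 n, ∀ j ∈ Finset.Icc 1 R, 0 < σ i j)
    (hc : ∀ i ∈ Finset.Icc 1 n, ψd i / (2 * ψl i) < c i)
    (hzdiff : ∀ i ∈ Finset.Icc 1 n, ∀ t : ℝ, 0 ≤ t → HasDerivAt (z i) (z' i t) t)
    (hψdiff : ∀ i ∈ Finset.Icc 1 n, ∀ t : ℝ, 0 ≤ t → HasDerivAt (ψ i) (ψ' i t) t)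
    (hΦdiff : ∀ i ∈ Finset.Icc 1 n, ∀ j ∈ Finset.Icc 1 R, ∀ t : ℝ, 0 ≤ t →
      HasDerivAt (Φ i j) (Φ' i j t) t)
    (hzzero : ∀ t : ℝ, z 0 t = 0)
    (hztop : ∀ t : ℝ, z (n + 1) t = 0)
    (hdyn : ∀ i ∈ Finset.Icc 1 n, ∀ t : ℝ, 0 ≤ t →
      z' i t = -(c i) * z i t + ψ i t * z (i + 1) t
        + ψ i t * ((∑ j ∈ Finset.Icc 1 R, ρ j t * (inner ℝ (Φ i j t) (ζ i j t) : ℝ)) - δ i t)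
        + ψ i t * (-(k i) * z i t - z (i - 1) t))
    (hadapt : ∀ i ∈ Finset.Icc 1 n, ∀ j ∈ Finset.Icc 1 R, ∀ t : ℝ, 0 ≤ t →
      Φ' i j t = (-(ρ j t) * γ i j * z i t) • ζ i j t - σ i j • (Φ i j t + θ i j))
    (V : ℝ → ℝ)
    (hV : ∀ t : ℝ, V t = (1 / 2) * ∑ i ∈ Finset.Icc 1 n, (z i t) ^ 2 / ψ i t
      + (1 / 2) * ∑ i ∈ Finset.Icc 1 n, ∑ j ∈ Finset.Icc 1 R, ‖Φ i j t‖ ^ 2 / γ i j)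
    (Wd : ℝ)
    (hWd : Wd = ∑ i ∈ Finset.Icc 1 n, (d i) ^ 2 / (4 * k i)
      + (1 / 2) * ∑ i ∈ Finset.Icc 1 n, ∑ j ∈ Finset.Icc 1 R, σ i j * ‖θ i j‖ ^ 2 / γ i j)
    (βd : ℝ)
    (hβd : βd = min
      (2 * ((Finset.Icc 1 n).inf' (Finset.nonempty_Icc.mpr hn)
          (fun i => c i - ψd i / (2 * ψl i)))
        * (((Finset.Icc 1 n).inf' (Finset.nonempty_Icc.mpr hn) ψl)
          / ((Finset.Icc 1 n).sup' (Finset.nonempty_Icc.mpr hn) ψu)))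
      ((Finset.Icc 1 n).inf' (Finset.nonempty_Icc.mpr hn)
        (fun i => (Finset.Icc 1 R).inf' (Finset.nonempty_Icc.mpr hR) (σ i))))
    :
    ∀ t : ℝ, 0 ≤ t → 0 ≤ V t ∧
      V t ≤ Wd / βd + (V 0 - Wd / βd) * Real.exp (-βd * t) := by
  -- basic memberships and positivity
  have h1n : 1 ∈ Finset.Icc 1 n := Finset.mem_Icc.mpr ⟨le_refl 1, hn⟩
  have hψpos : ∀ i ∈ Finset.Icc 1 n, ∀ t : ℝ, 0 ≤ t → 0 < ψ i t := fun i hi t ht =>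
    lt_of_lt_of_le (hψl i hi) (hψb i hi t ht).1
  have hne : (Finset.Icc 1 n).Nonempty := Finset.nonempty_Icc.mpr hn
  have hneR : (Finset.Icc 1 R).Nonempty := Finset.nonempty_Icc.mpr hR
  set cb : ℕ → ℝ := fun i => c i - ψd i / (2 * ψl i) with hcbdef
  have hcbpos : ∀ i ∈ Finset.Icc 1 n, 0 < cb i := fun i hi => sub_pos.mpr (hc i hi)
  have hψdnn : ∀ i ∈ Finset.Icc 1 n, 0 ≤ ψd i := fun i hi =>
    le_trans (abs_nonneg _) (hψd i hi 0 le_rfl)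
  have hcinf_pos : 0 < (Finset.Icc 1 n).inf' hne cb := (Finset.lt_inf'_iff hne).mpr hcbpos
  have hψlmin_pos : 0 < (Finset.Icc 1 n).inf' hne ψl := (Finset.lt_inf'_iff hne).mpr hψl
  have hψumax_pos : 0 < (Finset.Icc 1 n).sup' hne ψu := by
    have h1 : ψl 1 ≤ ψ 1 0 := (hψb 1 h1n 0 le_rfl).1
    have h2 : ψ 1 0 ≤ ψu 1 := (hψb 1 h1n 0 le_rfl).2
    have h3 : ψu 1 ≤ (Finset.Icc 1 n).sup' hne ψu := Finset.le_sup' ψu h1n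
    have := hψl 1 h1n
    linarith
  have hm_le_one : (Finset.Icc 1 n).inf' hne ψl / (Finset.Icc 1 n).sup' hne ψu ≤ 1 := by
    rw [div_le_one hψumax_pos]
    have h0 : (Finset.Icc 1 n).inf' hne ψl ≤ ψl 1 := Finset.inf'_le ψl h1n
    have h1 : ψl 1 ≤ ψ 1 0 := (hψb 1 h1n 0 le_rfl).1
    have h2 : ψ 1 0 ≤ ψu 1 := (hψb 1 h1n 0 le_rfl).2
    have h3 : ψu 1 ≤ (Finset.Icc 1 n).sup' hne ψu := Finset.le_sup' ψu h1n
    linarith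
  have hβpos : 0 < βd := by
    rw [hβd]
    apply lt_min
    · have h : 0 < (Finset.Icc 1 n).inf' hne ψl / (Finset.Icc 1 n).sup' hne ψu :=
        div_pos hψlmin_pos hψumax_pos
      positivity
    · exact (Finset.lt_inf'_iff hne).mpr fun i hi =>
        (Finset.lt_inf'_iff hneR).mpr fun j hj => hσ i hi j hj
  have hβne : βd ≠ 0 := ne_of_gt hβpos
  have hβcb : ∀ i ∈ Finset.Icc 1 n, βd ≤ 2 * cb i := by
    intro i hi
    have h1 : βd ≤ 2 * (Finset.Icc 1 n).inf' hne cb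
        * ((Finset.Icc 1 n).inf' hne ψl / (Finset.Icc 1 n).sup' hne ψu) := by
      rw [hβd]; exact min_le_left _ _
    have h2 : (Finset.Icc 1 n).inf' hne cb ≤ cb i := Finset.inf'_le cb hi
    nlinarith [div_pos hψlmin_pos hψumax_pos]
  have hβσ : ∀ i ∈ Finset.Icc 1 n, ∀ j ∈ Finset.Icc 1 R, βd ≤ σ i j := by
    intro i hi j hj
    have h1 : βd ≤ (Finset.Icc 1 n).inf' hne
        (fun i => (Finset.Icc 1 R).inf' hneR (σ i)) := by rw [hβd]; exact min_le_right _ _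
    have h2 : (Finset.Icc 1 n).inf' hne (fun i => (Finset.Icc 1 R).inf' hneR (σ i))
        ≤ (Finset.Icc 1 R).inf' hneR (σ i) := Finset.inf'_le _ hi
    have h3 : (Finset.Icc 1 R).inf' hneR (σ i) ≤ σ i j := Finset.inf'_le _ hj
    linarith
  -- the derivative candidate
  set V' : ℝ → ℝ := fun s =>
    (1/2) * (∑ i ∈ Finset.Icc 1 n,
      ((2 * z i s * z' i s) * ψ i s - (z i s)^2 * ψ' i s) / (ψ i s)^2)
    + (1/2) * (∑ i ∈ Finset.Icc 1 n, ∑ j ∈ Finset.Icc 1 R,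
      ((inner ℝ (Φ i j s) (Φ' i j s) : ℝ) + (inner ℝ (Φ' i j s) (Φ i j s) : ℝ)) / γ i j)
    with hV'def
  have hVfun : V = fun s => (1 / 2) * ∑ i ∈ Finset.Icc 1 n, (z i s) ^ 2 / ψ i s
      + (1 / 2) * ∑ i ∈ Finset.Icc 1 n, ∑ j ∈ Finset.Icc 1 R,
        (inner ℝ (Φ i j s) (Φ i j s) : ℝ) / γ i j := by
    funext s
    rw [hV s]
    simp only [real_inner_self_eq_norm_sq]
  have hVD : ∀ t : ℝ, 0 ≤ t → HasDerivAt V (V' t) t := by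
    intro t ht
    rw [hVfun]
    simp only [hV'def]
    apply HasDerivAt.add
    · have h : HasDerivAt (fun s => ∑ i ∈ Finset.Icc 1 n, (z i s) ^ 2 / ψ i s)
          (∑ i ∈ Finset.Icc 1 n,
            ((2 * z i t * z' i t) * ψ i t - (z i t)^2 * ψ' i t) / (ψ i t)^2) t := by
        apply HasDerivAt.fun_sum
        intro i hi
        have hd := ((hzdiff i hi t ht).fun_pow 2).fun_div (hψdiff i hi t ht)
          (ne_of_gt (hψpos i hi t ht))
        exact hd.congr_deriv (by norm_num)
      exact h.const_mul _
    · have h : HasDerivAt (fun s => ∑ i ∈ Finset.Icc 1 n, ∑ j ∈ Finset.Icc 1 R,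
          (inner ℝ (Φ i j s) (Φ i j s) : ℝ) / γ i j)
          (∑ i ∈ Finset.Icc 1 n, ∑ j ∈ Finset.Icc 1 R,
            ((inner ℝ (Φ i j t) (Φ' i j t) : ℝ) + (inner ℝ (Φ' i j t) (Φ i j t) : ℝ)) / γ i j) t := by
        apply HasDerivAt.fun_sum
        intro i hi
        apply HasDerivAt.fun_sum
        intro j hj
        exact (HasDerivAt.inner ℝ (hΦdiff i hi j hj t ht) (hΦdiff i hi j hj t ht)).div_const _
      exact h.const_mul _
  -- the key differential inequality
  have hVbound : ∀ t : ℝ, 0 ≤ t → V' t ≤ -βd * V t + Wd := by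
    intro t ht
    set P : ℕ → ℝ := fun i => -(c i) * (z i t)^2 / ψ i t - (z i t)^2 * ψ' i t / (2 * (ψ i t)^2)
      - k i * (z i t)^2 - z i t * δ i t with hPdef
    set T : ℕ → ℝ := fun i => z i t * z (i+1) t - z i t * z (i-1) t with hTdef
    set Q : ℕ → ℕ → ℝ := fun i j => -(σ i j) * ‖Φ i j t‖^2 / γ i j
      - σ i j * (inner ℝ (Φ i j t) (θ i j) : ℝ) / γ i j with hQdef
    set C : ℕ → ℕ → ℝ := fun i j => ρ j t * (inner ℝ (Φ i j t) (ζ i j t) : ℝ) * z i t with hCdef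
    have hEa : ∀ i ∈ Finset.Icc 1 n,
        (1/2) * (((2 * z i t * z' i t) * ψ i t - (z i t)^2 * ψ' i t) / (ψ i t)^2)
          = P i + T i + ∑ j ∈ Finset.Icc 1 R, C i j := by
      intro i hi
      have hψne : ψ i t ≠ 0 := ne_of_gt (hψpos i hi t ht)
      rw [hdyn i hi t ht]
      simp only [hPdef, hTdef, hCdef]
      rw [← Finset.sum_mul]
      field_simp
      ring
    have hEb : ∀ i ∈ Finset.Icc 1 n, ∀ j ∈ Finset.Icc 1 R,
        (1/2) * (((inner ℝ (Φ i j t) (Φ' i j t) : ℝ) + (inner ℝ (Φ' i j t) (Φ i j t) : ℝ)) / γ i j)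
          = -(C i j) + Q i j := by
      intro i hi j hj
      have hγne : γ i j ≠ 0 := ne_of_gt (hγ i hi j hj)
      have h1 : (inner ℝ (Φ i j t) (Φ' i j t) : ℝ)
          = -(ρ j t) * γ i j * z i t * (inner ℝ (Φ i j t) (ζ i j t) : ℝ)
            - σ i j * (‖Φ i j t‖^2 + (inner ℝ (Φ i j t) (θ i j) : ℝ)) := by
        rw [hadapt i hi j hj t ht]
        rw [inner_sub_right, real_inner_smul_right, real_inner_smul_right, inner_add_right,
          real_inner_self_eq_norm_sq]
      have h2 : (inner ℝ (Φ' i j t) (Φ i j t) : ℝ) = (inner ℝ (Φ i j t) (Φ' i j t) : ℝ) :=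
        real_inner_comm _ _
      rw [h2, h1]
      simp only [hQdef, hCdef]
      field_simp
      ring
    have hV'eq : V' t = (∑ i ∈ Finset.Icc 1 n, P i) + (∑ i ∈ Finset.Icc 1 n, T i)
        + ∑ i ∈ Finset.Icc 1 n, ∑ j ∈ Finset.Icc 1 R, Q i j := by
      rw [hV'def]
      simp only [Finset.mul_sum]
      rw [← Finset.sum_add_distrib]
      have step : ∀ i ∈ Finset.Icc 1 n,
          (1/2) * (((2 * z i t * z' i t) * ψ i t - (z i t)^2 * ψ' i t) / (ψ i t)^2)
            + ∑ j ∈ Finset.Icc 1 R,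
              (1/2) * (((inner ℝ (Φ i j t) (Φ' i j t) : ℝ)
                + (inner ℝ (Φ' i j t) (Φ i j t) : ℝ)) / γ i j)
          = (P i + T i) + ∑ j ∈ Finset.Icc 1 R, Q i j := by
        intro i hi
        rw [hEa i hi, Finset.sum_congr rfl (fun j hj => hEb i hi j hj),
          Finset.sum_add_distrib, Finset.sum_neg_distrib]
        ring
      rw [Finset.sum_congr rfl step, Finset.sum_add_distrib, Finset.sum_add_distrib]
    -- telescoping sum vanishes
    have hT0 : ∑ i ∈ Finset.Icc 1 n, T i = 0 := by
      have h1 : Finset.Icc 1 n = Finset.Ico 1 (n+1) := by rw [Finset.Ico_add_one_right_eq_Icc]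
      rw [h1, Finset.sum_Ico_eq_sum_range]
      simp only [Nat.add_sub_cancel]
      have h2 : ∀ i ∈ Finset.range n, T (1 + i)
          = (fun m => z (m+1) t * z m t) (i+1) - (fun m => z (m+1) t * z m t) i := by
        intro i _
        simp only [hTdef]
        have e1 : 1 + i = i + 1 := by omega
        have e2 : 1 + i - 1 = i := by omega
        rw [e2, e1]
        ring
      rw [Finset.sum_congr rfl h2, Finset.sum_range_sub (fun m => z (m+1) t * z m t)]
      simp [hzzero, hztop]
    -- per-term bounds
    have hPB : ∀ i ∈ Finset.Icc 1 n,
        P i ≤ -βd * ((1/2) * ((z i t)^2 / ψ i t)) + (d i)^2 / (4 * k i) := by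
      intro i hi
      have hψp := hψpos i hi t ht
      have hψne : ψ i t ≠ 0 := ne_of_gt hψp
      have hψlp := hψl i hi
      have hψlne : ψl i ≠ 0 := ne_of_gt hψlp
      have hψ1 := (hψb i hi t ht).1
      have hψd' := abs_le.mp (hψd i hi t ht)
      have hδ' := abs_le.mp (hδ i hi t ht)
      have hki := hk i hi
      have hψdi := hψdnn i hi
      -- key coefficient inequality
      have hkey : βd * ψ i t ≤ 2 * c i * ψ i t + ψ' i t := by
        have hb : βd ≤ 2 * c i - ψd i / ψl i := by
          have := hβcb i hi
          rw [hcbdef] at this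
          have e : 2 * (c i - ψd i / (2 * ψl i)) = 2 * c i - ψd i / ψl i := by
            field_simp
          linarith [e ▸ this]
        have hq : ψd i ≤ ψd i / ψl i * ψ i t := by
          rw [div_mul_eq_mul_div, le_div_iff₀ hψlp]
          nlinarith
        nlinarith [mul_le_mul_of_nonneg_right hb (le_of_lt hψp)]
      have hA : -(c i) * (z i t)^2 / ψ i t - (z i t)^2 * ψ' i t / (2 * (ψ i t)^2)
          ≤ -βd * ((1/2) * ((z i t)^2 / ψ i t)) := by
        have e1 : -(c i) * (z i t)^2 / ψ i t - (z i t)^2 * ψ' i t / (2 * (ψ i t)^2)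
            = ((z i t)^2 * (-(2 * c i * ψ i t) - ψ' i t)) / (2 * (ψ i t)^2) := by
          field_simp
        have e2 : -βd * ((1/2) * ((z i t)^2 / ψ i t))
            = ((z i t)^2 * (-(βd * ψ i t))) / (2 * (ψ i t)^2) := by
          field_simp
        rw [e1, e2]
        gcongr ?_ / _
        exact mul_le_mul_of_nonneg_left (by linarith) (sq_nonneg _)
      have hB : -(k i) * (z i t)^2 - z i t * δ i t ≤ (d i)^2 / (4 * k i) := by
        rw [le_div_iff₀ (by positivity : (0:ℝ) < 4 * k i)]
        nlinarith [sq_nonneg (2 * k i * z i t + δ i t), sq_le_sq' hδ'.1 hδ'.2]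
      simp only [hPdef]
      linarith
    have hQB : ∀ i ∈ Finset.Icc 1 n, ∀ j ∈ Finset.Icc 1 R,
        Q i j ≤ -βd * ((1/2) * (‖Φ i j t‖^2 / γ i j))
          + (1/2) * (σ i j * ‖θ i j‖^2 / γ i j) := by
      intro i hi j hj
      have hγp := hγ i hi j hj
      have hγne : γ i j ≠ 0 := ne_of_gt hγp
      have hσp := hσ i hi j hj
      have hβσ' := hβσ i hi j hj
      have hin := abs_le.mp (abs_real_inner_le_norm (Φ i j t) (θ i j))
      have hkey : -(σ i j) * ‖Φ i j t‖^2 - σ i j * (inner ℝ (Φ i j t) (θ i j) : ℝ)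
          ≤ -βd * ((1/2) * ‖Φ i j t‖^2) + (1/2) * (σ i j * ‖θ i j‖^2) := by
        have hP2 : ‖Φ i j t‖ * ‖θ i j‖ ≤ (1/2) * (‖Φ i j t‖^2 + ‖θ i j‖^2) := by
          nlinarith [sq_nonneg (‖Φ i j t‖ - ‖θ i j‖)]
        have h1 : σ i j * (-(inner ℝ (Φ i j t) (θ i j) : ℝ)) ≤ σ i j * (‖Φ i j t‖ * ‖θ i j‖) :=
          mul_le_mul_of_nonneg_left (by linarith [hin.1]) (le_of_lt hσp)
        have h2 : σ i j * (‖Φ i j t‖ * ‖θ i j‖)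
            ≤ σ i j * ((1/2) * (‖Φ i j t‖^2 + ‖θ i j‖^2)) :=
          mul_le_mul_of_nonneg_left hP2 (le_of_lt hσp)
        have h3 : 0 ≤ (σ i j - βd) * ‖Φ i j t‖^2 :=
          mul_nonneg (by linarith) (sq_nonneg _)
        nlinarith
      have e1 : Q i j = (-(σ i j) * ‖Φ i j t‖^2 - σ i j * (inner ℝ (Φ i j t) (θ i j) : ℝ)) / γ i j := by
        simp only [hQdef]
        ring
      have e2 : -βd * ((1/2) * (‖Φ i j t‖^2 / γ i j)) + (1/2) * (σ i j * ‖θ i j‖^2 / γ i j)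
          = (-βd * ((1/2) * ‖Φ i j t‖^2) + (1/2) * (σ i j * ‖θ i j‖^2)) / γ i j := by
        ring
      rw [e1, e2]
      gcongr ?_ / _
    -- assemble
    rw [hV'eq, hT0, add_zero]
    calc (∑ i ∈ Finset.Icc 1 n, P i) + ∑ i ∈ Finset.Icc 1 n, ∑ j ∈ Finset.Icc 1 R, Q i j
        ≤ (∑ i ∈ Finset.Icc 1 n,
            (-βd * ((1/2) * ((z i t)^2 / ψ i t)) + (d i)^2 / (4 * k i)))
          + ∑ i ∈ Finset.Icc 1 n, ∑ j ∈ Finset.Icc 1 R,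
            (-βd * ((1/2) * (‖Φ i j t‖^2 / γ i j)) + (1/2) * (σ i j * ‖θ i j‖^2 / γ i j)) :=
          add_le_add (Finset.sum_le_sum hPB)
            (Finset.sum_le_sum fun i hi => Finset.sum_le_sum (hQB i hi))
      _ = -βd * V t + Wd := by
          rw [hV t, hWd]
          simp only [mul_add, Finset.mul_sum, Finset.sum_add_distrib]
          ring
  intro t ht
  constructor
  · rw [hV t]
    have h1 : 0 ≤ ∑ i ∈ Finset.Icc 1 n, (z i t) ^ 2 / ψ i t :=
      Finset.sum_nonneg fun i hi => div_nonneg (sq_nonneg _) (le_of_lt (hψpos i hi t ht))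
    have h2 : 0 ≤ ∑ i ∈ Finset.Icc 1 n, ∑ j ∈ Finset.Icc 1 R, ‖Φ i j t‖ ^ 2 / γ i j :=
      Finset.sum_nonneg fun i hi => Finset.sum_nonneg fun j hj =>
        div_nonneg (sq_nonneg _) (le_of_lt (hγ i hi j hj))
    linarith
  · have cont : ContinuousOn V (Set.Icc 0 t) := fun x hx =>
      ((hVD x hx.1).continuousAt).continuousWithinAt
    have key := le_gronwallBound_of_liminf_deriv_right_le (f := V) (f' := V')
      (δ := V 0) (K := -βd) (ε := Wd) (a := 0) (b := t) cont
      (fun x hx r hr => ((hVD x hx.1).hasDerivWithinAt).liminf_right_slope_le hr)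
      le_rfl
      (fun x hx => by linarith [hVbound x hx.1])
      t (Set.mem_Icc.mpr ⟨ht, le_rfl⟩)
    have hKne : -βd ≠ 0 := neg_ne_zero.mpr hβne
    rw [gronwallBound_of_K_ne_0 hKne] at key
    simp only [sub_zero] at key
    have : V 0 * Real.exp (-βd * t) + Wd / -βd * (Real.exp (-βd * t) - 1)
        = Wd / βd + (V 0 - Wd / βd) * Real.exp (-βd * t) := by
      field_simp
      ring
    linarith [key, this.symm.le]
end

section
/- Under the transformed closed-loop system assumptions, the transformed state converges to the residual set 𝒟 = { Σ_{i=1}^n z_i² ≤ 2 ψ̄_M W_d/β_d }: for every ε > 0 there exists T ≥ 0 such that Σ_{i=1}^n z_i(t)² ≤ 2 ψ̄_M W_d/β_d + ε for all t ≥ T. (This is the residual-set conclusion of Theorem 1, with the constant ψ̄_M = max_i ψ̄_i in place of the paper's min.) -/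
private lemma telescope_aux (a : ℕ → ℝ) (n : ℕ) :
    ∑ i ∈ Finset.Icc 1 n, (a i - a (i - 1)) = a n - a 0 := by
  induction n with
  | zero => simp
  | succ m ih =>
    rw [Finset.sum_Icc_succ_top (Nat.le_add_left 1 m), ih]
    simp only [Nat.add_sub_cancel]
    ring

set_option maxHeartbeats 1000000 in
/-- Under the transformed closed-loop system assumptions, the transformed state converges to the residual set `{Σᵢ zᵢ² ≤ 2 ψ̄_M W_d/β_d}`: for every `ε > 0` there exists `T ≥ 0` such that `Σᵢ zᵢ(t)² ≤ 2 ψ̄_M W_d/β_d + ε` for all `t ≥ T`. -/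
theorem state_converges_to_residual_set
    (n R : ℕ) (hn : 1 ≤ n) (hR : 1 ≤ R)
    (N : ℕ → ℕ → ℕ)
    (z z' : ℕ → ℝ → ℝ)
    (ψ ψ' : ℕ → ℝ → ℝ)
    (Φ Φ' : (i : ℕ) → (j : ℕ) → ℝ → EuclideanSpace ℝ (Fin (N i j)))
    (ρ : ℕ → ℝ → ℝ)
    (ζ : (i : ℕ) → (j : ℕ) → ℝ → EuclideanSpace ℝ (Fin (N i j)))
    (δ : ℕ → ℝ → ℝ)
    (ψl ψu ψd d k c : ℕ → ℝ)
    (γ σ : ℕ → ℕ → ℝ)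
    (θ : (i : ℕ) → (j : ℕ) → EuclideanSpace ℝ (Fin (N i j)))
    (hψl : ∀ i ∈ Finset.Icc 1 n, 0 < ψl i)
    (hψb : ∀ i ∈ Finset.Icc 1 n, ∀ t : ℝ, 0 ≤ t → ψl i ≤ ψ i t ∧ ψ i t ≤ ψu i)
    (hψd : ∀ i ∈ Finset.Icc 1 n, ∀ t : ℝ, 0 ≤ t → |ψ' i t| ≤ ψd i)
    (hδ : ∀ i ∈ Finset.Icc 1 n, ∀ t : ℝ, 0 ≤ t → |δ i t| ≤ d i)
    (hk : ∀ i ∈ Finset.Icc 1 n, 0 < k i)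
    (hγ : ∀ i ∈ Finset.Icc 1 n, ∀ j ∈ Finset.Icc 1 R, 0 < γ i j)
    (hσ : ∀ i ∈ Finset.Icc 1 n, ∀ j ∈ Finset.Icc 1 R, 0 < σ i j)
    (hc : ∀ i ∈ Finset.Icc 1 n, ψd i / (2 * ψl i) < c i)
    (hzdiff : ∀ i ∈ Finset.Icc 1 n, ∀ t : ℝ, 0 ≤ t → HasDerivAt (z i) (z' i t) t)
    (hψdiff : ∀ i ∈ Finset.Icc 1 n, ∀ t : ℝ, 0 ≤ t → HasDerivAt (ψ i) (ψ' i t) t)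
    (hΦdiff : ∀ i ∈ Finset.Icc 1 n, ∀ j ∈ Finset.Icc 1 R, ∀ t : ℝ, 0 ≤ t →
      HasDerivAt (Φ i j) (Φ' i j t) t)
    (hzzero : ∀ t : ℝ, z 0 t = 0)
    (hztop : ∀ t : ℝ, z (n + 1) t = 0)
    (hdyn : ∀ i ∈ Finset.Icc 1 n, ∀ t : ℝ, 0 ≤ t →
      z' i t = -(c i) * z i t + ψ i t * z (i + 1) t
        + ψ i t * ((∑ j ∈ Finset.Icc 1 R, ρ j t * (inner ℝ (Φ i j t) (ζ i j t) : ℝ)) - δ i t)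
        + ψ i t * (-(k i) * z i t - z (i - 1) t))
    (hadapt : ∀ i ∈ Finset.Icc 1 n, ∀ j ∈ Finset.Icc 1 R, ∀ t : ℝ, 0 ≤ t →
      Φ' i j t = (-(ρ j t) * γ i j * z i t) • ζ i j t - σ i j • (Φ i j t + θ i j))
    (V : ℝ → ℝ)
    (hV : ∀ t : ℝ, V t = (1 / 2) * ∑ i ∈ Finset.Icc 1 n, (z i t) ^ 2 / ψ i t
      + (1 / 2) * ∑ i ∈ Finset.Icc 1 n, ∑ j ∈ Finset.Icc 1 R, ‖Φ i j t‖ ^ 2 / γ i j)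
    (Wd : ℝ)
    (hWd : Wd = ∑ i ∈ Finset.Icc 1 n, (d i) ^ 2 / (4 * k i)
      + (1 / 2) * ∑ i ∈ Finset.Icc 1 n, ∑ j ∈ Finset.Icc 1 R, σ i j * ‖θ i j‖ ^ 2 / γ i j)
    (βd : ℝ)
    (hβd : βd = min
      (2 * ((Finset.Icc 1 n).inf' (Finset.nonempty_Icc.mpr hn)
          (fun i => c i - ψd i / (2 * ψl i)))
        * (((Finset.Icc 1 n).inf' (Finset.nonempty_Icc.mpr hn) ψl)
          / ((Finset.Icc 1 n).sup' (Finset.nonempty_Icc.mpr hn) ψu)))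
      ((Finset.Icc 1 n).inf' (Finset.nonempty_Icc.mpr hn)
        (fun i => (Finset.Icc 1 R).inf' (Finset.nonempty_Icc.mpr hR) (σ i))))
    (ψM : ℝ)
    (hψM : ψM = (Finset.Icc 1 n).sup' (Finset.nonempty_Icc.mpr hn) ψu)
    :
    ∀ ε : ℝ, 0 < ε → ∃ T : ℝ, 0 ≤ T ∧ ∀ t : ℝ, T ≤ t →
      ∑ i ∈ Finset.Icc 1 n, (z i t) ^ 2 ≤ 2 * ψM * Wd / βd + ε := by
  intro ε hε
  have hFne : (Finset.Icc 1 n).Nonempty := Finset.nonempty_Icc.mpr hn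
  have hGne : (Finset.Icc 1 R).Nonempty := Finset.nonempty_Icc.mpr hR
  obtain ⟨i₀, hi₀⟩ := hFne
  -- basic positivity
  have hψpos : ∀ i ∈ Finset.Icc 1 n, ∀ t : ℝ, 0 ≤ t → 0 < ψ i t := fun i hi t ht =>
    lt_of_lt_of_le (hψl i hi) (hψb i hi t ht).1
  have hψlu : ∀ i ∈ Finset.Icc 1 n, ψl i ≤ ψu i := fun i hi =>
    le_trans (hψb i hi 0 le_rfl).1 (hψb i hi 0 le_rfl).2
  have hψupos : ∀ i ∈ Finset.Icc 1 n, 0 < ψu i := fun i hi =>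
    lt_of_lt_of_le (hψl i hi) (hψlu i hi)
  have hψMpos : 0 < ψM := by
    rw [hψM]; exact lt_of_lt_of_le (hψupos i₀ hi₀) (Finset.le_sup' ψu hi₀)
  have hψle : ∀ i ∈ Finset.Icc 1 n, ∀ t : ℝ, 0 ≤ t → ψ i t ≤ ψM := by
    intro i hi t ht
    rw [hψM]
    exact le_trans (hψb i hi t ht).2 (Finset.le_sup' ψu hi)
  -- facts about βd
  have hsupu_pos : 0 < (Finset.Icc 1 n).sup' (Finset.nonempty_Icc.mpr hn) ψu := by
    exact lt_of_lt_of_le (hψupos i₀ hi₀) (Finset.le_sup' ψu hi₀)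
  have hinfl_pos : 0 < (Finset.Icc 1 n).inf' (Finset.nonempty_Icc.mpr hn) ψl := by
    rw [Finset.lt_inf'_iff]; exact hψl
  have hinfc_pos : 0 < (Finset.Icc 1 n).inf' (Finset.nonempty_Icc.mpr hn)
      (fun i => c i - ψd i / (2 * ψl i)) := by
    rw [Finset.lt_inf'_iff]; exact fun i hi => sub_pos.mpr (hc i hi)
  have hβpos : 0 < βd := by
    rw [hβd]
    apply lt_min
    · positivity
    · rw [Finset.lt_inf'_iff]
      intro i hi
      rw [Finset.lt_inf'_iff]
      exact hσ i hi
  have hβ2c : ∀ i ∈ Finset.Icc 1 n, βd ≤ 2 * (c i - ψd i / (2 * ψl i)) := by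
    intro i hi
    have h1 : βd ≤ 2 * ((Finset.Icc 1 n).inf' (Finset.nonempty_Icc.mpr hn)
        (fun i => c i - ψd i / (2 * ψl i)))
        * (((Finset.Icc 1 n).inf' (Finset.nonempty_Icc.mpr hn) ψl)
          / ((Finset.Icc 1 n).sup' (Finset.nonempty_Icc.mpr hn) ψu)) := by
      rw [hβd]; exact min_le_left _ _
    have hratio : ((Finset.Icc 1 n).inf' (Finset.nonempty_Icc.mpr hn) ψl)
        / ((Finset.Icc 1 n).sup' (Finset.nonempty_Icc.mpr hn) ψu) ≤ 1 := by
      rw [div_le_one hsupu_pos]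
      exact le_trans (Finset.inf'_le ψl hi₀)
        (le_trans (hψlu i₀ hi₀) (Finset.le_sup' ψu hi₀))
    have h2 : 2 * ((Finset.Icc 1 n).inf' (Finset.nonempty_Icc.mpr hn)
        (fun i => c i - ψd i / (2 * ψl i)))
        * (((Finset.Icc 1 n).inf' (Finset.nonempty_Icc.mpr hn) ψl)
          / ((Finset.Icc 1 n).sup' (Finset.nonempty_Icc.mpr hn) ψu))
        ≤ 2 * ((Finset.Icc 1 n).inf' (Finset.nonempty_Icc.mpr hn)
        (fun i => c i - ψd i / (2 * ψl i))) * 1 := by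
      apply mul_le_mul_of_nonneg_left hratio (by positivity)
    have h3 : (Finset.Icc 1 n).inf' (Finset.nonempty_Icc.mpr hn)
        (fun i => c i - ψd i / (2 * ψl i)) ≤ c i - ψd i / (2 * ψl i) :=
      Finset.inf'_le _ hi
    nlinarith
  have hβσ : ∀ i ∈ Finset.Icc 1 n, ∀ j ∈ Finset.Icc 1 R, βd ≤ σ i j := by
    intro i hi j hj
    have h1 : βd ≤ (Finset.Icc 1 n).inf' (Finset.nonempty_Icc.mpr hn)
        (fun i => (Finset.Icc 1 R).inf' (Finset.nonempty_Icc.mpr hR) (σ i)) := by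
      rw [hβd]; exact min_le_right _ _
    exact le_trans h1 (le_trans (Finset.inf'_le _ hi) (Finset.inf'_le _ hj))
  -- the derivative of V
  set V' : ℝ → ℝ := fun t =>
    (1/2) * ∑ i ∈ Finset.Icc 1 n,
      ((2 * z i t * z' i t * ψ i t - z i t ^ 2 * ψ' i t) / ψ i t ^ 2)
    + (1/2) * ∑ i ∈ Finset.Icc 1 n, ∑ j ∈ Finset.Icc 1 R,
      (((inner ℝ (Φ i j t) (Φ' i j t) : ℝ) + (inner ℝ (Φ' i j t) (Φ i j t) : ℝ)) / γ i j)
    with hV'def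
  have hVfun : V = fun s => (1 / 2) * ∑ i ∈ Finset.Icc 1 n, (z i s) ^ 2 / ψ i s
      + (1 / 2) * ∑ i ∈ Finset.Icc 1 n, ∑ j ∈ Finset.Icc 1 R, ‖Φ i j s‖ ^ 2 / γ i j :=
    funext hV
  have hderiv : ∀ t : ℝ, 0 ≤ t → HasDerivAt V (V' t) t := by
    intro t ht
    rw [hVfun, hV'def]
    have hpart1 : HasDerivAt (fun s => ∑ i ∈ Finset.Icc 1 n, z i s ^ 2 / ψ i s)
        (∑ i ∈ Finset.Icc 1 n,
          ((2 * z i t * z' i t * ψ i t - z i t ^ 2 * ψ' i t) / ψ i t ^ 2)) t := by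
      apply HasDerivAt.fun_sum
      intro i hi
      have h := ((hzdiff i hi t ht).fun_pow 2).fun_div (hψdiff i hi t ht) (hψpos i hi t ht).ne'
      convert h using 2
      · rfl
      push_cast
      ring
    have hpart2 : HasDerivAt
        (fun s => ∑ i ∈ Finset.Icc 1 n, ∑ j ∈ Finset.Icc 1 R, ‖Φ i j s‖ ^ 2 / γ i j)
        (∑ i ∈ Finset.Icc 1 n, ∑ j ∈ Finset.Icc 1 R,
          (((inner ℝ (Φ i j t) (Φ' i j t) : ℝ) + (inner ℝ (Φ' i j t) (Φ i j t) : ℝ)) / γ i j)) t := by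
      apply HasDerivAt.fun_sum
      intro i hi
      apply HasDerivAt.fun_sum
      intro j hj
      have heq : (fun s => ‖Φ i j s‖ ^ 2 / γ i j)
          = fun s => (inner ℝ (Φ i j s) (Φ i j s) : ℝ) / γ i j := by
        funext s; rw [real_inner_self_eq_norm_sq]
      rw [heq]
      exact ((hΦdiff i hi j hj t ht).inner ℝ (hΦdiff i hi j hj t ht)).div_const _
    exact (hpart1.const_mul (1/2)).add (hpart2.const_mul (1/2))
  -- the key differential inequality
  have hVle : ∀ t : ℝ, 0 ≤ t → V' t ≤ -βd * V t + Wd := by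
    intro t ht
    have claim1 : ∀ i ∈ Finset.Icc 1 n,
        (1/2) * ((2 * z i t * z' i t * ψ i t - z i t ^ 2 * ψ' i t) / ψ i t ^ 2)
          ≤ (-(βd/2) * (z i t ^ 2 / ψ i t) + d i ^ 2 / (4 * k i)
            + (z i t * z (i+1) t - z i t * z (i-1) t))
            + ∑ j ∈ Finset.Icc 1 R, ρ j t * z i t * (inner ℝ (Φ i j t) (ζ i j t) : ℝ) := by
      intro i hi
      have hψt := hψpos i hi t ht
      have hz' := hdyn i hi t ht
      have hkpos := hk i hi
      have hψlpos := hψl i hi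
      have hψlle := (hψb i hi t ht).1
      have hψdt := hψd i hi t ht
      have hδt := hδ i hi t ht
      have hψd0 : 0 ≤ ψd i := le_trans (abs_nonneg _) hψdt
      have hβ2ci := hβ2c i hi
      have hS : ∑ j ∈ Finset.Icc 1 R, ρ j t * z i t * (inner ℝ (Φ i j t) (ζ i j t) : ℝ)
          = z i t * ∑ j ∈ Finset.Icc 1 R, ρ j t * (inner ℝ (Φ i j t) (ζ i j t) : ℝ) := by
        rw [Finset.mul_sum]
        exact Finset.sum_congr rfl fun j _ => by ring
      have eL : (1/2) * ((2 * z i t * z' i t * ψ i t - z i t ^ 2 * ψ' i t) / ψ i t ^ 2)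
          = (-(c i) - ψ' i t / (2 * ψ i t)) * (z i t ^ 2 / ψ i t)
            - z i t * δ i t - k i * z i t ^ 2
            + (z i t * z (i+1) t - z i t * z (i-1) t)
            + ∑ j ∈ Finset.Icc 1 R, ρ j t * z i t * (inner ℝ (Φ i j t) (ζ i j t) : ℝ) := by
        rw [hS, hz']
        field_simp
        ring
      rw [eL]
      have hcoef : βd/2 ≤ c i + ψ' i t / (2 * ψ i t) := by
        have h2 : -(ψ' i t / (2 * ψ i t)) ≤ ψd i / (2 * ψl i) := by
          rw [← neg_div, div_le_div_iff₀ (by positivity) (by positivity)]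
          have hn1 : -(ψd i) ≤ ψ' i t := neg_le_of_abs_le hψdt
          nlinarith
        have h1 : βd/2 ≤ c i - ψd i / (2 * ψl i) := by linarith
        linarith
      have hA : (-(c i) - ψ' i t / (2 * ψ i t)) * (z i t ^ 2 / ψ i t)
          ≤ -(βd/2) * (z i t ^ 2 / ψ i t) := by
        apply mul_le_mul_of_nonneg_right _ (by positivity)
        linarith
      have hB : -(z i t * δ i t) - k i * z i t ^ 2 ≤ d i ^ 2 / (4 * k i) := by
        have h1 : -(z i t * δ i t) ≤ |z i t| * d i := by
          calc -(z i t * δ i t) ≤ |z i t * δ i t| := neg_le_abs _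
            _ = |z i t| * |δ i t| := abs_mul _ _
            _ ≤ |z i t| * d i := mul_le_mul_of_nonneg_left hδt (abs_nonneg _)
        have h2 : |z i t| * d i - k i * z i t ^ 2 ≤ d i ^ 2 / (4 * k i) := by
          rw [← sq_abs (z i t), le_div_iff₀ (by positivity)]
          nlinarith [sq_nonneg (2 * k i * |z i t| - d i)]
        linarith
      linarith
    have claim2 : ∀ i ∈ Finset.Icc 1 n, ∀ j ∈ Finset.Icc 1 R,
        (1/2) * (((inner ℝ (Φ i j t) (Φ' i j t) : ℝ) + (inner ℝ (Φ' i j t) (Φ i j t) : ℝ)) / γ i j)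
          ≤ -(ρ j t * z i t * (inner ℝ (Φ i j t) (ζ i j t) : ℝ))
            + (-(βd/2) * (‖Φ i j t‖ ^ 2 / γ i j) + (1/2) * (σ i j * ‖θ i j‖ ^ 2 / γ i j)) := by
      intro i hi j hj
      have hg := hγ i hi j hj
      have hs := hσ i hi j hj
      have hβs := hβσ i hi j hj
      have hΦ'e := hadapt i hi j hj t ht
      have hip : (inner ℝ (Φ i j t) (Φ' i j t) : ℝ)
          = -(ρ j t) * γ i j * z i t * (inner ℝ (Φ i j t) (ζ i j t) : ℝ)
            - σ i j * ‖Φ i j t‖ ^ 2 - σ i j * (inner ℝ (Φ i j t) (θ i j) : ℝ) := by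
        rw [hΦ'e, inner_sub_right, inner_smul_right, inner_smul_right, inner_add_right,
          real_inner_self_eq_norm_sq]
        ring
      have hip2 : (inner ℝ (Φ' i j t) (Φ i j t) : ℝ) = (inner ℝ (Φ i j t) (Φ' i j t) : ℝ) :=
        real_inner_comm _ _
      rw [hip2, hip]
      have hnorm : -((‖Φ i j t‖ ^ 2 + ‖θ i j‖ ^ 2) / 2) ≤ (inner ℝ (Φ i j t) (θ i j) : ℝ) := by
        have h1 : |(inner ℝ (Φ i j t) (θ i j) : ℝ)| ≤ ‖Φ i j t‖ * ‖θ i j‖ :=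
          abs_real_inner_le_norm _ _
        nlinarith [sq_nonneg (‖Φ i j t‖ - ‖θ i j‖),
          neg_abs_le (inner ℝ (Φ i j t) (θ i j) : ℝ)]
      have hnum : -(σ i j) * ‖Φ i j t‖ ^ 2 - σ i j * (inner ℝ (Φ i j t) (θ i j) : ℝ)
          ≤ -(βd/2) * ‖Φ i j t‖ ^ 2 + (1/2) * (σ i j * ‖θ i j‖ ^ 2) := by
        nlinarith [mul_le_mul_of_nonneg_left hnorm hs.le,
          mul_nonneg (sub_nonneg.mpr hβs) (sq_nonneg ‖Φ i j t‖)]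
      have e1 : (1/2) * ((( -(ρ j t) * γ i j * z i t * (inner ℝ (Φ i j t) (ζ i j t) : ℝ)
            - σ i j * ‖Φ i j t‖ ^ 2 - σ i j * (inner ℝ (Φ i j t) (θ i j) : ℝ))
          + (-(ρ j t) * γ i j * z i t * (inner ℝ (Φ i j t) (ζ i j t) : ℝ)
            - σ i j * ‖Φ i j t‖ ^ 2 - σ i j * (inner ℝ (Φ i j t) (θ i j) : ℝ))) / γ i j)
          = -(ρ j t * z i t * (inner ℝ (Φ i j t) (ζ i j t) : ℝ))
            + (-(σ i j) * ‖Φ i j t‖ ^ 2 - σ i j * (inner ℝ (Φ i j t) (θ i j) : ℝ)) / γ i j := by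
        field_simp
        ring
      rw [e1]
      have e2 : -(βd/2) * (‖Φ i j t‖ ^ 2 / γ i j) + (1/2) * (σ i j * ‖θ i j‖ ^ 2 / γ i j)
          = (-(βd/2) * ‖Φ i j t‖ ^ 2 + (1/2) * (σ i j * ‖θ i j‖ ^ 2)) / γ i j := by
        ring
      rw [e2]
      have h3 := (div_le_div_iff_of_pos_right hg).mpr hnum
      linarith [h3]
    -- assemble
    have hsum1 : (1/2) * ∑ i ∈ Finset.Icc 1 n,
        ((2 * z i t * z' i t * ψ i t - z i t ^ 2 * ψ' i t) / ψ i t ^ 2)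
        ≤ ∑ i ∈ Finset.Icc 1 n,
          ((-(βd/2) * (z i t ^ 2 / ψ i t) + d i ^ 2 / (4 * k i)
            + (z i t * z (i+1) t - z i t * z (i-1) t))
            + ∑ j ∈ Finset.Icc 1 R, ρ j t * z i t * (inner ℝ (Φ i j t) (ζ i j t) : ℝ)) := by
      rw [Finset.mul_sum]
      exact Finset.sum_le_sum claim1
    have hsum2 : (1/2) * ∑ i ∈ Finset.Icc 1 n, ∑ j ∈ Finset.Icc 1 R,
        (((inner ℝ (Φ i j t) (Φ' i j t) : ℝ) + (inner ℝ (Φ' i j t) (Φ i j t) : ℝ)) / γ i j)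
        ≤ ∑ i ∈ Finset.Icc 1 n, ∑ j ∈ Finset.Icc 1 R,
          (-(ρ j t * z i t * (inner ℝ (Φ i j t) (ζ i j t) : ℝ))
            + (-(βd/2) * (‖Φ i j t‖ ^ 2 / γ i j) + (1/2) * (σ i j * ‖θ i j‖ ^ 2 / γ i j))) := by
      rw [Finset.mul_sum]
      apply Finset.sum_le_sum
      intro i hi
      rw [Finset.mul_sum]
      exact Finset.sum_le_sum (claim2 i hi)
    have htele : ∑ i ∈ Finset.Icc 1 n, (z i t * z (i+1) t - z i t * z (i-1) t) = 0 := by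
      have hcongr : ∀ i ∈ Finset.Icc 1 n,
          z i t * z (i+1) t - z i t * z (i-1) t
          = (fun m => z m t * z (m+1) t) i - (fun m => z m t * z (m+1) t) (i-1) := by
        intro i hi
        obtain ⟨hi1, _⟩ := Finset.mem_Icc.mp hi
        have : i - 1 + 1 = i := Nat.succ_pred_eq_of_pos hi1
        simp only [this]
        ring
      rw [Finset.sum_congr rfl hcongr, telescope_aux]
      simp [hztop, hzzero]
    have hfinal : ∑ i ∈ Finset.Icc 1 n,
          ((-(βd/2) * (z i t ^ 2 / ψ i t) + d i ^ 2 / (4 * k i)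
            + (z i t * z (i+1) t - z i t * z (i-1) t))
            + ∑ j ∈ Finset.Icc 1 R, ρ j t * z i t * (inner ℝ (Φ i j t) (ζ i j t) : ℝ))
        + ∑ i ∈ Finset.Icc 1 n, ∑ j ∈ Finset.Icc 1 R,
          (-(ρ j t * z i t * (inner ℝ (Φ i j t) (ζ i j t) : ℝ))
            + (-(βd/2) * (‖Φ i j t‖ ^ 2 / γ i j) + (1/2) * (σ i j * ‖θ i j‖ ^ 2 / γ i j)))
        = -βd * V t + Wd := by
      rw [hV t, hWd]
      rw [Finset.sum_add_distrib, Finset.sum_add_distrib, Finset.sum_add_distrib, htele]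
      have hsplit2 : ∑ i ∈ Finset.Icc 1 n, ∑ j ∈ Finset.Icc 1 R,
          (-(ρ j t * z i t * (inner ℝ (Φ i j t) (ζ i j t) : ℝ))
            + (-(βd/2) * (‖Φ i j t‖ ^ 2 / γ i j) + (1/2) * (σ i j * ‖θ i j‖ ^ 2 / γ i j)))
          = -(∑ i ∈ Finset.Icc 1 n, ∑ j ∈ Finset.Icc 1 R,
              (ρ j t * z i t * (inner ℝ (Φ i j t) (ζ i j t) : ℝ)))
            + (-(βd/2) * ∑ i ∈ Finset.Icc 1 n, ∑ j ∈ Finset.Icc 1 R, ‖Φ i j t‖ ^ 2 / γ i j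
              + (1/2) * ∑ i ∈ Finset.Icc 1 n, ∑ j ∈ Finset.Icc 1 R,
                  σ i j * ‖θ i j‖ ^ 2 / γ i j) := by
        rw [Finset.mul_sum, Finset.mul_sum, ← Finset.sum_neg_distrib]
        rw [← Finset.sum_add_distrib, ← Finset.sum_add_distrib]
        apply Finset.sum_congr rfl
        intro i _
        rw [Finset.sum_add_distrib, Finset.sum_add_distrib, Finset.mul_sum, Finset.mul_sum,
          ← Finset.sum_neg_distrib]
      rw [hsplit2]
      have h1 : ∑ i ∈ Finset.Icc 1 n, -(βd/2) * (z i t ^ 2 / ψ i t)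
          = -(βd/2) * ∑ i ∈ Finset.Icc 1 n, z i t ^ 2 / ψ i t := by
        rw [Finset.mul_sum]
      rw [h1]
      ring
    calc V' t = (1/2) * ∑ i ∈ Finset.Icc 1 n,
          ((2 * z i t * z' i t * ψ i t - z i t ^ 2 * ψ' i t) / ψ i t ^ 2)
        + (1/2) * ∑ i ∈ Finset.Icc 1 n, ∑ j ∈ Finset.Icc 1 R,
          (((inner ℝ (Φ i j t) (Φ' i j t) : ℝ) + (inner ℝ (Φ' i j t) (Φ i j t) : ℝ)) / γ i j) := by
          rw [hV'def]
      _ ≤ _ + _ := add_le_add hsum1 hsum2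
      _ = -βd * V t + Wd := hfinal
  
  -- Gronwall comparison
  have hβne : βd ≠ 0 := ne_of_gt hβpos
  have hcomp : ∀ t : ℝ, 0 ≤ t → V t ≤ Wd / βd + (V 0 - Wd / βd) * Real.exp (-(βd * t)) := by
    set g : ℝ → ℝ := fun s => (V s - Wd / βd) * Real.exp (βd * s) with hgdef
    have hgderiv : ∀ s : ℝ, 0 ≤ s →
        HasDerivAt g ((V' s + βd * V s - Wd) * Real.exp (βd * s)) s := by
      intro s hs
      have h1 := (hderiv s hs).sub_const (Wd / βd)
      have h2 : HasDerivAt (fun u : ℝ => Real.exp (βd * u)) (βd * Real.exp (βd * s)) s := by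
        have := (Real.hasDerivAt_exp (βd * s)).comp s ((hasDerivAt_id s).const_mul βd)
        simpa [mul_comm, Function.comp_def] using this
      have h3 := h1.mul h2
      have he : V' s * Real.exp (βd * s) + (V s - Wd / βd) * (βd * Real.exp (βd * s))
          = (V' s + βd * V s - Wd) * Real.exp (βd * s) := by
        field_simp
        ring
      rw [hgdef, ← he]
      exact h3
    have hganti : AntitoneOn g (Set.Ici (0:ℝ)) := by
      apply antitoneOn_of_deriv_nonpos (convex_Ici 0)
      · intro s hs
        exact ((hgderiv s hs).continuousAt).continuousWithinAt
      · intro s hs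
        rw [interior_Ici] at hs
        exact ((hgderiv s (le_of_lt hs)).differentiableAt).differentiableWithinAt
      · intro s hs
        rw [interior_Ici] at hs
        rw [(hgderiv s (le_of_lt hs)).deriv]
        apply mul_nonpos_of_nonpos_of_nonneg _ (Real.exp_nonneg _)
        have := hVle s (le_of_lt hs)
        linarith
    intro t ht
    have hg0 : g t ≤ g 0 := hganti Set.self_mem_Ici (Set.mem_Ici.mpr ht) ht
    have hgt : (V t - Wd / βd) * Real.exp (βd * t) ≤ V 0 - Wd / βd := by
      simpa [hgdef, Real.exp_zero] using hg0
    have hexp : (0:ℝ) < Real.exp (-(βd * t)) := Real.exp_pos _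
    have hmul := mul_le_mul_of_nonneg_right hgt hexp.le
    rw [mul_assoc, ← Real.exp_add] at hmul
    simp only [add_neg_cancel, Real.exp_zero, mul_one] at hmul
    linarith
  -- lower bound on V
  have hlow : ∀ t : ℝ, 0 ≤ t → ∑ i ∈ Finset.Icc 1 n, (z i t) ^ 2 ≤ 2 * ψM * V t := by
    intro t ht
    have h1 : ∑ i ∈ Finset.Icc 1 n, z i t ^ 2 / ψM
        ≤ ∑ i ∈ Finset.Icc 1 n, z i t ^ 2 / ψ i t :=
      Finset.sum_le_sum fun i hi =>
        div_le_div_of_nonneg_left (sq_nonneg _) (hψpos i hi t ht) (hψle i hi t ht)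
    have h2 : (0:ℝ) ≤ ∑ i ∈ Finset.Icc 1 n, ∑ j ∈ Finset.Icc 1 R, ‖Φ i j t‖ ^ 2 / γ i j :=
      Finset.sum_nonneg fun i hi => Finset.sum_nonneg fun j hj =>
        div_nonneg (sq_nonneg _) (hγ i hi j hj).le
    have h3 : (1/2) * ∑ i ∈ Finset.Icc 1 n, z i t ^ 2 / ψM ≤ V t := by
      rw [hV t]; linarith
    rw [← Finset.sum_div] at h3
    have h5 : (∑ i ∈ Finset.Icc 1 n, z i t ^ 2) / ψM ≤ 2 * V t := by linarith
    have h6 := (div_le_iff₀ hψMpos).mp h5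
    linarith
  -- choose T
  obtain ⟨T₀, hT₀⟩ : ∃ T₀ : ℝ, ∀ t ≥ T₀,
      2 * ψM * (V 0 - Wd / βd) * Real.exp (-(βd * t)) ≤ ε := by
    rcases le_or_gt (2 * ψM * (V 0 - Wd / βd)) 0 with hC | hC
    · exact ⟨0, fun t _ =>
        le_trans (mul_nonpos_of_nonpos_of_nonneg hC (Real.exp_nonneg _)) hε.le⟩
    · have h1 : Filter.Tendsto (fun t : ℝ => βd * t) Filter.atTop Filter.atTop :=
        Filter.Tendsto.const_mul_atTop hβpos Filter.tendsto_id
      have h2 : Filter.Tendsto (fun t : ℝ => -(βd * t)) Filter.atTop Filter.atBot :=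
        Filter.tendsto_neg_atTop_atBot.comp h1
      have h3 : Filter.Tendsto (fun t : ℝ => Real.exp (-(βd * t))) Filter.atTop (nhds 0) :=
        Real.tendsto_exp_atBot.comp h2
      have h4 := h3.const_mul (2 * ψM * (V 0 - Wd / βd))
      simp only [mul_zero] at h4
      have hev : ∀ᶠ t in Filter.atTop,
          2 * ψM * (V 0 - Wd / βd) * Real.exp (-(βd * t)) ≤ ε := by
        have := h4.eventually (eventually_le_nhds hε)
        simpa [mul_assoc] using this
      obtain ⟨T₀, hT₀⟩ := Filter.eventually_atTop.mp hev
      exact ⟨T₀, hT₀⟩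
  refine ⟨max T₀ 0, le_max_right _ _, ?_⟩
  intro t htT
  have ht0 : 0 ≤ t := le_trans (le_max_right T₀ 0) htT
  have hVt := hcomp t ht0
  have hlowt := hlow t ht0
  have hexp := hT₀ t (le_trans (le_max_left T₀ 0) htT)
  have hmul := mul_le_mul_of_nonneg_left hVt (by positivity : (0:ℝ) ≤ 2 * ψM)
  have heq : 2 * ψM * (Wd / βd + (V 0 - Wd / βd) * Real.exp (-(βd * t)))
      = 2 * ψM * Wd / βd + 2 * ψM * (V 0 - Wd / βd) * Real.exp (-(βd * t)) := by ring
  rw [heq] at hmul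
  linarith
end

section
/- First-step Lyapunov lemma: let R ≥ 1 and N_j ∈ ℕ for j = 1,…,R; let z, ψ : [0,∞) → ℝ and Φ_j : [0,∞) → ℝ^{N_j} be differentiable, and let ρ_j, δ, w : [0,∞) → ℝ and ζ_j : [0,∞) → ℝ^{N_j} be arbitrary functions. Assume constants 0 < ψ̲ ≤ ψ(t) ≤ ψ̄, |ψ′(t)| ≤ ψ_d, |δ(t)| ≤ d for all t ≥ 0, design constants k > 0, γ_j > 0, σ_j > 0, a constant c > ψ_d/(2ψ̲), fixed vectors θ*_j ∈ ℝ^{N_j}, and the dynamics z′ = −c z + ψ w + ψ (Σ_{j=1}^R ρ_j ⟨Φ_j, ζ_j⟩ − δ) − ψ k z and Φ_j′ = −ρ_j γ_j ζ_j z − σ_j (Φ_j + θ*_j). Then V₁(t) = z(t)²/(2ψ(t)) + (1/2) Σ_{j=1}^R ‖Φ_j(t)‖²/γ_j is differentiable and satisfies, for all t ≥ 0, V₁′(t) ≤ −c̄ z(t)²/ψ̄ − (1/2) Σ_{j=1}^R σ_j ‖Φ_j(t)‖²/γ_j + z(t) w(t) + d²/(4k) + (1/2) Σ_{j=1}^R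 σ_j ‖θ*_j‖²/γ_j, where c̄ = c − ψ_d/(2ψ̲) > 0. -/
set_option maxHeartbeats 1000000 in
/-- First-step Lyapunov lemma (base step of the inductive proof of
Theorem 1): under the stated dynamics and adaptation laws for the first transformed state,
the function `V₁(t) = z(t)²/(2ψ(t)) + (1/2) Σⱼ ‖Φⱼ(t)‖²/γⱼ` is differentiable and satisfies
`V₁′(t) ≤ −c̄ z(t)²/ψ̄ − (1/2) Σⱼ σⱼ ‖Φⱼ(t)‖²/γⱼ + z(t) w(t) + d²/(4k)
+ (1/2) Σⱼ σⱼ ‖θ*ⱼ‖²/γⱼ`, where `c̄ = c − ψ_d/(2ψ̲) > 0`. -/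
theorem first_step_lyapunov_lemma
    (R : ℕ) (hR : 1 ≤ R)
    (N : ℕ → ℕ)
    (z z' ψ ψ' : ℝ → ℝ)
    (Φ Φ' : (j : ℕ) → ℝ → EuclideanSpace ℝ (Fin (N j)))
    (ρ : ℕ → ℝ → ℝ)
    (δ w : ℝ → ℝ)
    (ζ : (j : ℕ) → ℝ → EuclideanSpace ℝ (Fin (N j)))
    (ψl ψu ψd d k c : ℝ)
    (γ σ : ℕ → ℝ)
    (θ : (j : ℕ) → EuclideanSpace ℝ (Fin (N j)))
    (hψl : 0 < ψl)
    (hψb : ∀ t : ℝ, 0 ≤ t → ψl ≤ ψ t ∧ ψ t ≤ ψu)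
    (hψd : ∀ t : ℝ, 0 ≤ t → |ψ' t| ≤ ψd)
    (hδ : ∀ t : ℝ, 0 ≤ t → |δ t| ≤ d)
    (hk : 0 < k)
    (hγ : ∀ j ∈ Finset.Icc 1 R, 0 < γ j)
    (hσ : ∀ j ∈ Finset.Icc 1 R, 0 < σ j)
    (hc : ψd / (2 * ψl) < c)
    (hzdiff : ∀ t : ℝ, 0 ≤ t → HasDerivAt z (z' t) t)
    (hψdiff : ∀ t : ℝ, 0 ≤ t → HasDerivAt ψ (ψ' t) t)
    (hΦdiff : ∀ j ∈ Finset.Icc 1 R, ∀ t : ℝ, 0 ≤ t → HasDerivAt (Φ j) (Φ' j t) t)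
    (hdyn : ∀ t : ℝ, 0 ≤ t →
      z' t = -c * z t + ψ t * w t
        + ψ t * ((∑ j ∈ Finset.Icc 1 R, ρ j t * (inner ℝ (Φ j t) (ζ j t) : ℝ)) - δ t)
        - ψ t * (k * z t))
    (hadapt : ∀ j ∈ Finset.Icc 1 R, ∀ t : ℝ, 0 ≤ t →
      Φ' j t = (-(ρ j t) * γ j * z t) • ζ j t - σ j • (Φ j t + θ j))
    (V₁ : ℝ → ℝ)
    (hV₁ : ∀ t : ℝ, V₁ t = (z t) ^ 2 / (2 * ψ t)
      + (1 / 2) * ∑ j ∈ Finset.Icc 1 R, ‖Φ j t‖ ^ 2 / γ j) :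
    ∃ V₁' : ℝ → ℝ, ∀ t : ℝ, 0 ≤ t → HasDerivAt V₁ (V₁' t) t ∧
      V₁' t ≤ -((c - ψd / (2 * ψl)) * (z t) ^ 2 / ψu)
        - (1 / 2) * ∑ j ∈ Finset.Icc 1 R, σ j * ‖Φ j t‖ ^ 2 / γ j
        + z t * w t + d ^ 2 / (4 * k)
        + (1 / 2) * ∑ j ∈ Finset.Icc 1 R, σ j * ‖θ j‖ ^ 2 / γ j := by
  classical
  set S := Finset.Icc 1 R with hS
  refine ⟨fun t => (2 * z t ^ 1 * z' t * (2 * ψ t) - z t ^ 2 * (2 * ψ' t)) / (2 * ψ t) ^ 2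
    + (1 / 2) * ∑ j ∈ S,
      (((inner ℝ (Φ j t) (Φ' j t) : ℝ) + (inner ℝ (Φ' j t) (Φ j t) : ℝ)) / γ j), ?_⟩
  intro t ht
  have hψpos : 0 < ψ t := lt_of_lt_of_le hψl (hψb t ht).1
  have hψne : ψ t ≠ 0 := ne_of_gt hψpos
  have hψu : ψ t ≤ ψu := (hψb t ht).2
  have hψlle : ψl ≤ ψ t := (hψb t ht).1
  have hψupos : 0 < ψu := lt_of_lt_of_le hψpos hψu
  have hψd0 : 0 ≤ ψd := le_trans (abs_nonneg _) (hψd t ht)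
  have hψ'b : -ψd ≤ ψ' t ∧ ψ' t ≤ ψd := abs_le.mp (hψd t ht)
  have hd0 : 0 ≤ d := le_trans (abs_nonneg _) (hδ t ht)
  constructor
  · -- differentiability
    have hVeq : V₁ = fun s => (z s) ^ 2 / (2 * ψ s)
        + (1 / 2) * ∑ j ∈ S, ‖Φ j s‖ ^ 2 / γ j := funext hV₁
    rw [hVeq]
    have h1 : HasDerivAt (fun s => (z s) ^ 2 / (2 * ψ s))
        ((2 * z t ^ 1 * z' t * (2 * ψ t) - z t ^ 2 * (2 * ψ' t)) / (2 * ψ t) ^ 2) t :=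
      ((hzdiff t ht).pow 2).div ((hψdiff t ht).const_mul 2) (by positivity)
    have h2 : ∀ j ∈ S, HasDerivAt (fun s => ‖Φ j s‖ ^ 2 / γ j)
        (((inner ℝ (Φ j t) (Φ' j t) : ℝ) + (inner ℝ (Φ' j t) (Φ j t) : ℝ)) / γ j) t := by
      intro j hj
      have h := ((hΦdiff j hj t ht).inner (𝕜 := ℝ) (hΦdiff j hj t ht)).div_const (γ j)
      have heq : (fun s => ‖Φ j s‖ ^ 2 / γ j)
          = fun s => (inner ℝ (Φ j s) (Φ j s) : ℝ) / γ j := by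
        funext s; rw [real_inner_self_eq_norm_sq]
      rw [heq]; exact h
    exact h1.add ((HasDerivAt.fun_sum h2).const_mul (1 / 2))
  · -- the inequality
    set Sv : ℝ := ∑ j ∈ S, ρ j t * (inner ℝ (Φ j t) (ζ j t) : ℝ) with hSv
    have hzz : (2 * z t ^ 1 * z' t * (2 * ψ t) - z t ^ 2 * (2 * ψ' t)) / (2 * ψ t) ^ 2
        = (-c * z t ^ 2 / ψ t - z t ^ 2 * ψ' t / (2 * ψ t ^ 2))
          + z t * w t + z t * Sv + (-(z t * δ t) - k * z t ^ 2) := by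
      rw [hdyn t ht, hSv]
      field_simp
      ring
    have hterm : ∀ j ∈ S,
        ((inner ℝ (Φ j t) (Φ' j t) : ℝ) + (inner ℝ (Φ' j t) (Φ j t) : ℝ)) / γ j
        = -(2 * (ρ j t * (inner ℝ (Φ j t) (ζ j t) : ℝ) * z t))
          - 2 * (σ j * ‖Φ j t‖ ^ 2 / γ j)
          - 2 * (σ j * (inner ℝ (θ j) (Φ j t) : ℝ) / γ j) := by
      intro j hj
      have hγj : (γ j) ≠ 0 := ne_of_gt (hγ j hj)
      rw [real_inner_comm (Φ' j t) (Φ j t), hadapt j hj t ht]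
      simp only [inner_sub_left, real_inner_smul_left, inner_add_left,
        real_inner_self_eq_norm_sq, real_inner_comm (Φ j t) (ζ j t)]
      field_simp
      ring
    have hsum : (1 / 2) * ∑ j ∈ S,
        (((inner ℝ (Φ j t) (Φ' j t) : ℝ) + (inner ℝ (Φ' j t) (Φ j t) : ℝ)) / γ j)
        = -(z t * Sv) - (∑ j ∈ S, σ j * ‖Φ j t‖ ^ 2 / γ j)
          - ∑ j ∈ S, σ j * (inner ℝ (θ j) (Φ j t) : ℝ) / γ j := by
      rw [Finset.sum_congr rfl hterm, Finset.sum_sub_distrib, Finset.sum_sub_distrib]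
      have hA : ∑ j ∈ S, -(2 * (ρ j t * (inner ℝ (Φ j t) (ζ j t) : ℝ) * z t))
          = -(2 * (z t * Sv)) := by
        rw [hSv, Finset.mul_sum, Finset.mul_sum, ← Finset.sum_neg_distrib]
        exact Finset.sum_congr rfl fun j _ => by ring
      have hB : ∑ j ∈ S, 2 * (σ j * ‖Φ j t‖ ^ 2 / γ j)
          = 2 * ∑ j ∈ S, σ j * ‖Φ j t‖ ^ 2 / γ j := (Finset.mul_sum _ _ _).symm
      have hC : ∑ j ∈ S, 2 * (σ j * (inner ℝ (θ j) (Φ j t) : ℝ) / γ j)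
          = 2 * ∑ j ∈ S, σ j * (inner ℝ (θ j) (Φ j t) : ℝ) / γ j := (Finset.mul_sum _ _ _).symm
      rw [hA, hB, hC]; ring
    -- bound 1
    have e1 : -c * z t ^ 2 / ψ t - z t ^ 2 * ψ' t / (2 * ψ t ^ 2)
        ≤ -((c - ψd / (2 * ψl)) * z t ^ 2 / ψu) := by
      have hL : -c * z t ^ 2 / ψ t - z t ^ 2 * ψ' t / (2 * ψ t ^ 2)
          = (-(2 * c * z t ^ 2 * ψ t) - z t ^ 2 * ψ' t) / (2 * ψ t ^ 2) := by
        field_simp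
      have hRr : -((c - ψd / (2 * ψl)) * z t ^ 2 / ψu)
          = (-((2 * ψl * c - ψd) * z t ^ 2)) / (2 * ψl * ψu) := by
        rw [eq_div_iff (by positivity : (2 * ψl * ψu) ≠ 0)]
        field_simp
      rw [hL, hRr, div_le_div_iff₀ (by positivity) (by positivity)]
      have h2c : 0 ≤ 2 * ψl * c - ψd := by
        have := (div_lt_iff₀ (by positivity : (0:ℝ) < 2 * ψl)).mp hc
        nlinarith
      nlinarith [mul_nonneg (sq_nonneg (z t)) (mul_nonneg (mul_nonneg h2c hψpos.le)
          (sub_nonneg.mpr hψu)),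
        mul_nonneg (sq_nonneg (z t)) (mul_nonneg (mul_nonneg hψd0 hψupos.le)
          (sub_nonneg.mpr hψlle)),
        mul_le_mul_of_nonneg_left hψ'b.1
          (by positivity : (0:ℝ) ≤ 2 * ψl * ψu * z t ^ 2)]
    -- bound 2
    have e2 : -(z t * δ t) - k * z t ^ 2 ≤ d ^ 2 / (4 * k) := by
      rw [le_div_iff₀ (by positivity : (0:ℝ) < 4 * k)]
      have hδb := abs_le.mp (hδ t ht)
      have hm : 0 ≤ (d - δ t) * (d + δ t) := mul_nonneg (by linarith) (by linarith)
      nlinarith [sq_nonneg (2 * k * z t + δ t), hm]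
    -- bound 3
    have e3 : -(∑ j ∈ S, σ j * (inner ℝ (θ j) (Φ j t) : ℝ) / γ j)
        ≤ (1 / 2) * ∑ j ∈ S, σ j * ‖Φ j t‖ ^ 2 / γ j
          + (1 / 2) * ∑ j ∈ S, σ j * ‖θ j‖ ^ 2 / γ j := by
      rw [← Finset.sum_neg_distrib, Finset.mul_sum, Finset.mul_sum, ← Finset.sum_add_distrib]
      refine Finset.sum_le_sum ?_
      intro j hj
      have hσγ : 0 ≤ σ j / γ j := le_of_lt (div_pos (hσ j hj) (hγ j hj))
      have hip : -(inner ℝ (θ j) (Φ j t) : ℝ) ≤ (‖Φ j t‖ ^ 2 + ‖θ j‖ ^ 2) / 2 := by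
        have h := abs_real_inner_le_norm (θ j) (Φ j t)
        have h2 := neg_le_abs (inner ℝ (θ j) (Φ j t) : ℝ)
        nlinarith [sq_nonneg (‖Φ j t‖ - ‖θ j‖)]
      calc -(σ j * (inner ℝ (θ j) (Φ j t) : ℝ) / γ j)
          = (σ j / γ j) * (-(inner ℝ (θ j) (Φ j t) : ℝ)) := by ring
        _ ≤ (σ j / γ j) * ((‖Φ j t‖ ^ 2 + ‖θ j‖ ^ 2) / 2) :=
            mul_le_mul_of_nonneg_left hip hσγ
        _ = 1 / 2 * (σ j * ‖Φ j t‖ ^ 2 / γ j) + 1 / 2 * (σ j * ‖θ j‖ ^ 2 / γ j) := by ring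
    beta_reduce
    rw [hzz, hsum]
    linarith [e1, e2, e3]
end

section
/- Inductive step of the Lyapunov chain: let m ≥ 1, R ≥ 1, and for i = 1,…,m+1 let z_i : [0,∞) → ℝ and Φ_{i,j} : [0,∞) → ℝ^{N_{i,j}} be differentiable, and let z_{m+2}, ρ_j, δ_{m+1} : [0,∞) → ℝ and ζ_{m+1,j} : [0,∞) → ℝ^{N_{m+1,j}} be arbitrary functions. Suppose U : [0,∞) → ℝ is differentiable with U′(t) ≤ −Σ_{i=1}^m c̄_i z_i(t)²/ψ̄_i − (1/2) Σ_{i=1}^m Σ_{j=1}^R σ_{i,j} ‖Φ_{i,j}(t)‖²/γ_{i,j} + z_m(t) z_{m+1}(t) + Σ_{i=1}^m d_i²/(4k_i) + (1/2) Σ_{i=1}^m Σ_{j=1}^R σ_{i,j} ‖θ*_{i,j}‖²/γ_{i,j} for all t ≥ 0, where c̄_i > 0, ψ̄_i > 0, σ_{i,j} > 0, γ_{i,j} > 0, k_i > 0, d_i ≥ 0, θ*_{i,j} ∈ ℝ^{N_{i,j}}. Let ψ_{m+1} : [0,∞) → ℝ be differentiable with 0 < ψ̲_{m+1} ≤ ψ_{m+1}(t)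 ≤ ψ̄_{m+1} and |ψ_{m+1}′(t)| ≤ ψ_{m+1,d}, let c_{m+1} > ψ_{m+1,d}/(2ψ̲_{m+1}), k_{m+1} > 0, γ_{m+1,j} > 0, σ_{m+1,j} > 0, |δ_{m+1}(t)| ≤ d_{m+1}, θ*_{m+1,j} ∈ ℝ^{N_{m+1,j}}, and assume the dynamics z_{m+1}′ = −c_{m+1} z_{m+1} + ψ_{m+1} z_{m+2} + ψ_{m+1} (Σ_{j=1}^R ρ_j ⟨Φ_{m+1,j}, ζ_{m+1,j}⟩ − δ_{m+1}) + ψ_{m+1} (−k_{m+1} z_{m+1} − z_m) and Φ_{m+1,j}′ = −ρ_j γ_{m+1,j} ζ_{m+1,j} z_{m+1} − σ_{m+1,j} (Φ_{m+1,j} + θ*_{m+1,j}). Then V(t) = U(t) + z_{m+1}(t)²/(2ψ_{m+1}(t)) + (1/2) Σ_{j=1}^R ‖Φ_{m+1,j}(t)‖²/γ_{m+1,j} satisfies V′(t) ≤ −Σ_{i=1}^{m+1} c̄_i z_i(t)²/ψ̄_i − (1/2) Σ_{i=1}^{m+1} Σ_{j=1}^R σ_{i,j} ‖Φ_{i,j}(t)‖²/γ_{i,j}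 + z_{m+1}(t) z_{m+2}(t) + Σ_{i=1}^{m+1} d_i²/(4k_i) + (1/2) Σ_{i=1}^{m+1} Σ_{j=1}^R σ_{i,j} ‖θ*_{i,j}‖²/γ_{i,j}, where c̄_{m+1} = c_{m+1} − ψ_{m+1,d}/(2ψ̲_{m+1}) > 0. -/
set_option maxHeartbeats 1000000


/-- Inductive step of the Lyapunov chain: given the Lyapunov derivative
bound for the first `m` transformed states, the dynamics of the `(m+1)`-th transformed
state with stabilizing term `−k_{m+1} z_{m+1} − z_m` and leakage adaptation laws, the
augmented Lyapunov function `V = U + z_{m+1}²/(2ψ_{m+1}) + (1/2) Σⱼ ‖Φ_{m+1,j}‖²/γ_{m+1,j}`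
satisfies the corresponding bound with `m+1` in place of `m`, where
`c̄_{m+1} = c_{m+1} − ψ_{m+1,d}/(2ψ̲_{m+1}) > 0`. -/
theorem lyapunov_chain_inductive_step
    (m R : ℕ) (hm : 1 ≤ m) (hR : 1 ≤ R)
    (N : ℕ → ℕ → ℕ)
    (z z' : ℕ → ℝ → ℝ)
    (Φ Φ' : (i : ℕ) → (j : ℕ) → ℝ → EuclideanSpace ℝ (Fin (N i j)))
    (ρ : ℕ → ℝ → ℝ)
    (ζ : (j : ℕ) → ℝ → EuclideanSpace ℝ (Fin (N (m + 1) j)))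
    (δ : ℝ → ℝ)
    (ψ ψ' : ℝ → ℝ)
    (cb ψu d k : ℕ → ℝ)
    (γ σ : ℕ → ℕ → ℝ)
    (θ : (i : ℕ) → (j : ℕ) → EuclideanSpace ℝ (Fin (N i j)))
    (ψl₁ ψd₁ c₁ : ℝ)
    (U U' : ℝ → ℝ)
    (hzdiff : ∀ i ∈ Finset.Icc 1 (m + 1), ∀ t : ℝ, 0 ≤ t → HasDerivAt (z i) (z' i t) t)
    (hΦdiff : ∀ i ∈ Finset.Icc 1 (m + 1), ∀ j ∈ Finset.Icc 1 R, ∀ t : ℝ, 0 ≤ t →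
      HasDerivAt (Φ i j) (Φ' i j t) t)
    (hcb : ∀ i ∈ Finset.Icc 1 m, 0 < cb i)
    (hψu : ∀ i ∈ Finset.Icc 1 m, 0 < ψu i)
    (hσ : ∀ i ∈ Finset.Icc 1 (m + 1), ∀ j ∈ Finset.Icc 1 R, 0 < σ i j)
    (hγ : ∀ i ∈ Finset.Icc 1 (m + 1), ∀ j ∈ Finset.Icc 1 R, 0 < γ i j)
    (hk : ∀ i ∈ Finset.Icc 1 (m + 1), 0 < k i)
    (hd : ∀ i ∈ Finset.Icc 1 (m + 1), 0 ≤ d i)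
    (hUdiff : ∀ t : ℝ, 0 ≤ t → HasDerivAt U (U' t) t)
    (hU' : ∀ t : ℝ, 0 ≤ t →
      U' t ≤ -(∑ i ∈ Finset.Icc 1 m, cb i * (z i t) ^ 2 / ψu i)
        - (1 / 2) * ∑ i ∈ Finset.Icc 1 m, ∑ j ∈ Finset.Icc 1 R,
            σ i j * ‖Φ i j t‖ ^ 2 / γ i j
        + z m t * z (m + 1) t
        + ∑ i ∈ Finset.Icc 1 m, (d i) ^ 2 / (4 * k i)
        + (1 / 2) * ∑ i ∈ Finset.Icc 1 m, ∑ j ∈ Finset.Icc 1 R,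
            σ i j * ‖θ i j‖ ^ 2 / γ i j)
    (hψdiff : ∀ t : ℝ, 0 ≤ t → HasDerivAt ψ (ψ' t) t)
    (hψl₁ : 0 < ψl₁)
    (hψb : ∀ t : ℝ, 0 ≤ t → ψl₁ ≤ ψ t ∧ ψ t ≤ ψu (m + 1))
    (hψd : ∀ t : ℝ, 0 ≤ t → |ψ' t| ≤ ψd₁)
    (hc₁ : ψd₁ / (2 * ψl₁) < c₁)
    (hδ : ∀ t : ℝ, 0 ≤ t → |δ t| ≤ d (m + 1))
    (hcbtop : cb (m + 1) = c₁ - ψd₁ / (2 * ψl₁))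
    (hdyn : ∀ t : ℝ, 0 ≤ t →
      z' (m + 1) t = -c₁ * z (m + 1) t + ψ t * z (m + 2) t
        + ψ t * ((∑ j ∈ Finset.Icc 1 R,
            ρ j t * (inner ℝ (Φ (m + 1) j t) (ζ j t) : ℝ)) - δ t)
        + ψ t * (-(k (m + 1)) * z (m + 1) t - z m t))
    (hadapt : ∀ j ∈ Finset.Icc 1 R, ∀ t : ℝ, 0 ≤ t →
      Φ' (m + 1) j t = (-(ρ j t) * γ (m + 1) j * z (m + 1) t) • ζ j t
        - σ (m + 1) j • (Φ (m + 1) j t + θ (m + 1) j))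
    (V : ℝ → ℝ)
    (hV : ∀ t : ℝ, V t = U t + (z (m + 1) t) ^ 2 / (2 * ψ t)
      + (1 / 2) * ∑ j ∈ Finset.Icc 1 R, ‖Φ (m + 1) j t‖ ^ 2 / γ (m + 1) j) :
    ∃ V' : ℝ → ℝ, ∀ t : ℝ, 0 ≤ t → HasDerivAt V (V' t) t ∧
      V' t ≤ -(∑ i ∈ Finset.Icc 1 (m + 1), cb i * (z i t) ^ 2 / ψu i)
        - (1 / 2) * ∑ i ∈ Finset.Icc 1 (m + 1), ∑ j ∈ Finset.Icc 1 R,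
            σ i j * ‖Φ i j t‖ ^ 2 / γ i j
        + z (m + 1) t * z (m + 2) t
        + ∑ i ∈ Finset.Icc 1 (m + 1), (d i) ^ 2 / (4 * k i)
        + (1 / 2) * ∑ i ∈ Finset.Icc 1 (m + 1), ∑ j ∈ Finset.Icc 1 R,
            σ i j * ‖θ i j‖ ^ 2 / γ i j := by
  classical
  have hmem : (m + 1) ∈ Finset.Icc 1 (m + 1) := by simp
  refine ⟨fun t => U' t
      + (z (m + 1) t * z' (m + 1) t / ψ t
          - (z (m + 1) t) ^ 2 * ψ' t / (2 * (ψ t) ^ 2))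
      + ∑ j ∈ Finset.Icc 1 R,
          (inner ℝ (Φ' (m + 1) j t) (Φ (m + 1) j t) : ℝ) / γ (m + 1) j, ?_⟩
  intro t ht
  have hψt := hψb t ht
  have hψpos : 0 < ψ t := lt_of_lt_of_le hψl₁ hψt.1
  have hψne : ψ t ≠ 0 := ne_of_gt hψpos
  constructor
  · -- derivative existence
    have hVfun : V = fun s => U s + (z (m + 1) s) ^ 2 / (2 * ψ s)
        + (1 / 2) * ∑ j ∈ Finset.Icc 1 R, ‖Φ (m + 1) j s‖ ^ 2 / γ (m + 1) j :=
      funext hV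
    rw [hVfun]
    have h1 : HasDerivAt (fun s => (z (m + 1) s) ^ 2 / (2 * ψ s))
        (z (m + 1) t * z' (m + 1) t / ψ t
          - (z (m + 1) t) ^ 2 * ψ' t / (2 * (ψ t) ^ 2)) t := by
      have hz := (hzdiff (m + 1) hmem t ht).fun_pow 2
      have hp := (hψdiff t ht).const_mul 2
      have hdv := hz.div hp (by positivity)
      refine hdv.congr_deriv ?_
      field_simp
      ring
    have h2 : HasDerivAt
        (fun s => (1 / 2 : ℝ) * ∑ j ∈ Finset.Icc 1 R, ‖Φ (m + 1) j s‖ ^ 2 / γ (m + 1) j)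
        (∑ j ∈ Finset.Icc 1 R,
          (inner ℝ (Φ' (m + 1) j t) (Φ (m + 1) j t) : ℝ) / γ (m + 1) j) t := by
      have h3 : ∀ j ∈ Finset.Icc 1 R, HasDerivAt
          (fun s => ‖Φ (m + 1) j s‖ ^ 2 / γ (m + 1) j)
          ((2 : ℝ) * (inner ℝ (Φ' (m + 1) j t) (Φ (m + 1) j t) : ℝ) / γ (m + 1) j) t := by
        intro j hj
        have hΦ := hΦdiff (m + 1) hmem j hj t ht
        have hin : HasDerivAt (fun s => (inner ℝ (Φ (m + 1) j s) (Φ (m + 1) j s) : ℝ))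
            ((inner ℝ (Φ (m + 1) j t) (Φ' (m + 1) j t) : ℝ)
              + (inner ℝ (Φ' (m + 1) j t) (Φ (m + 1) j t) : ℝ)) t :=
          HasDerivAt.inner ℝ hΦ hΦ
        have heq : (fun s => ‖Φ (m + 1) j s‖ ^ 2 / γ (m + 1) j)
            = fun s => (inner ℝ (Φ (m + 1) j s) (Φ (m + 1) j s) : ℝ) / γ (m + 1) j := by
          funext s
          rw [real_inner_self_eq_norm_sq]
        rw [heq]
        refine (hin.div_const (γ (m + 1) j)).congr_deriv ?_
        rw [real_inner_comm (Φ' (m + 1) j t)]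
        ring
      have h4 := (HasDerivAt.fun_sum h3).const_mul (1 / 2 : ℝ)
      refine h4.congr_deriv ?_
      rw [Finset.mul_sum]
      congr 1
      funext j
      ring
    exact ((hUdiff t ht).add h1).add h2
  · -- the inequality
    have hψd' := abs_le.mp (hψd t ht)
    have hψdnn : (0 : ℝ) ≤ ψd₁ := le_trans (abs_nonneg _) (hψd t ht)
    have hcbpos : 0 < cb (m + 1) := by rw [hcbtop]; linarith
    have hqpos : 0 < ψu (m + 1) := lt_of_lt_of_le hψpos hψt.2
    set a := z (m + 1) t with ha
    -- Step A: stability term bound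
    have hA : -c₁ * a ^ 2 / ψ t - a ^ 2 * ψ' t / (2 * (ψ t) ^ 2)
        ≤ -(cb (m + 1) * a ^ 2 / ψu (m + 1)) := by
      have h1 : cb (m + 1) * a ^ 2 / ψu (m + 1) ≤ cb (m + 1) * a ^ 2 / ψ t := by
        gcongr
        exact hψt.2
      have h2 : cb (m + 1) * a ^ 2 / ψ t
          = c₁ * a ^ 2 / ψ t - ψd₁ * a ^ 2 / (2 * ψl₁ * ψ t) := by
        rw [hcbtop]; field_simp
      have h4 : -(a ^ 2 * ψ' t) ≤ a ^ 2 * ψd₁ := by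
        nlinarith [mul_le_mul_of_nonneg_left hψd'.1 (sq_nonneg a)]
      have h5 : a ^ 2 * ψd₁ / (2 * (ψ t) ^ 2) ≤ ψd₁ * a ^ 2 / (2 * ψl₁ * ψ t) := by
        rw [div_le_div_iff₀ (by positivity) (by positivity)]
        nlinarith [mul_le_mul_of_nonneg_right
          (mul_le_mul_of_nonneg_left hψt.1 (mul_nonneg hψdnn (sq_nonneg a)))
          (le_of_lt hψpos)]
      have h6 : -(a ^ 2 * ψ' t) / (2 * (ψ t) ^ 2)
          ≤ a ^ 2 * ψd₁ / (2 * (ψ t) ^ 2) := by gcongr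
      have h7 : -(a ^ 2 * ψ' t) / (2 * (ψ t) ^ 2)
          = -(a ^ 2 * ψ' t / (2 * (ψ t) ^ 2)) := by ring
      calc -c₁ * a ^ 2 / ψ t - a ^ 2 * ψ' t / (2 * (ψ t) ^ 2)
          ≤ -c₁ * a ^ 2 / ψ t + ψd₁ * a ^ 2 / (2 * ψl₁ * ψ t) := by linarith [h6, h7, h5]
        _ = -(cb (m + 1) * a ^ 2 / ψ t) := by rw [h2]; ring
        _ ≤ -(cb (m + 1) * a ^ 2 / ψu (m + 1)) := by linarith [h1]
    -- Step B: disturbance bound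
    have hk1 := hk (m + 1) hmem
    have hd1 := hd (m + 1) hmem
    have hδ1 := abs_le.mp (hδ t ht)
    have hB : -(a * δ t) - k (m + 1) * a ^ 2 ≤ d (m + 1) ^ 2 / (4 * k (m + 1)) := by
      have hd2 : -(a * δ t) ≤ |a| * d (m + 1) := by
        calc -(a * δ t) ≤ |a * δ t| := neg_le_abs _
          _ = |a| * |δ t| := abs_mul _ _
          _ ≤ |a| * d (m + 1) := mul_le_mul_of_nonneg_left (hδ t ht) (abs_nonneg a)
      have hsq : (0:ℝ) ≤ 4 * k (m + 1) ^ 2 * a ^ 2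
          - 4 * (k (m + 1) * (|a| * d (m + 1))) + d (m + 1) ^ 2 := by
        calc (0:ℝ) ≤ (2 * k (m + 1) * |a| - d (m + 1)) ^ 2 := sq_nonneg _
          _ = 4 * k (m + 1) ^ 2 * |a| ^ 2
              - 4 * (k (m + 1) * (|a| * d (m + 1))) + d (m + 1) ^ 2 := by ring
          _ = 4 * k (m + 1) ^ 2 * a ^ 2
              - 4 * (k (m + 1) * (|a| * d (m + 1))) + d (m + 1) ^ 2 := by rw [sq_abs]
      rw [le_div_iff₀ (by positivity)]
      nlinarith [hsq,
        mul_le_mul_of_nonneg_left hd2 (by positivity : (0:ℝ) ≤ 4 * k (m + 1))]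
    -- Step C: adaptation sum bound
    have hC : ∑ j ∈ Finset.Icc 1 R,
          ((inner ℝ (Φ' (m + 1) j t) (Φ (m + 1) j t) : ℝ) / γ (m + 1) j
            + a * (ρ j t * (inner ℝ (Φ (m + 1) j t) (ζ j t) : ℝ)))
        ≤ ∑ j ∈ Finset.Icc 1 R,
          (-(σ (m + 1) j * ‖Φ (m + 1) j t‖ ^ 2 / γ (m + 1) j) / 2
            + σ (m + 1) j * ‖θ (m + 1) j‖ ^ 2 / γ (m + 1) j / 2) := by
      apply Finset.sum_le_sum
      intro j hj
      have hγ1 := hγ (m + 1) hmem j hj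
      have hσ1 := hσ (m + 1) hmem j hj
      have hin : (inner ℝ (Φ' (m + 1) j t) (Φ (m + 1) j t) : ℝ)
          = -(ρ j t) * γ (m + 1) j * a * (inner ℝ (Φ (m + 1) j t) (ζ j t) : ℝ)
            - σ (m + 1) j * (‖Φ (m + 1) j t‖ ^ 2
              + (inner ℝ (θ (m + 1) j) (Φ (m + 1) j t) : ℝ)) := by
        rw [hadapt j hj t ht, inner_sub_left, real_inner_smul_left, real_inner_smul_left,
          inner_add_left, real_inner_self_eq_norm_sq, real_inner_comm (ζ j t)]
      have hcs : -(inner ℝ (θ (m + 1) j) (Φ (m + 1) j t) : ℝ)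
          ≤ (‖θ (m + 1) j‖ ^ 2 + ‖Φ (m + 1) j t‖ ^ 2) / 2 := by
        have h8 := real_inner_le_norm (-(θ (m + 1) j)) (Φ (m + 1) j t)
        rw [inner_neg_left, norm_neg] at h8
        nlinarith [sq_nonneg (‖θ (m + 1) j‖ - ‖Φ (m + 1) j t‖)]
      rw [hin]
      have h9 : (-(ρ j t) * γ (m + 1) j * a * (inner ℝ (Φ (m + 1) j t) (ζ j t) : ℝ)
            - σ (m + 1) j * (‖Φ (m + 1) j t‖ ^ 2
              + (inner ℝ (θ (m + 1) j) (Φ (m + 1) j t) : ℝ))) / γ (m + 1) j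
            + a * (ρ j t * (inner ℝ (Φ (m + 1) j t) (ζ j t) : ℝ))
          = (-(σ (m + 1) j * ‖Φ (m + 1) j t‖ ^ 2)
              - σ (m + 1) j * (inner ℝ (θ (m + 1) j) (Φ (m + 1) j t) : ℝ)) / γ (m + 1) j := by
        rw [div_add' _ _ _ (ne_of_gt hγ1)]
        congr 1
        ring
      rw [h9]
      have h10 : -(σ (m + 1) j * ‖Φ (m + 1) j t‖ ^ 2)
            - σ (m + 1) j * (inner ℝ (θ (m + 1) j) (Φ (m + 1) j t) : ℝ)
          ≤ -(σ (m + 1) j * ‖Φ (m + 1) j t‖ ^ 2) / 2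
            + σ (m + 1) j * ‖θ (m + 1) j‖ ^ 2 / 2 := by
        nlinarith [mul_le_mul_of_nonneg_left hcs (le_of_lt hσ1)]
      calc (-(σ (m + 1) j * ‖Φ (m + 1) j t‖ ^ 2)
              - σ (m + 1) j * (inner ℝ (θ (m + 1) j) (Φ (m + 1) j t) : ℝ)) / γ (m + 1) j
          ≤ (-(σ (m + 1) j * ‖Φ (m + 1) j t‖ ^ 2) / 2
              + σ (m + 1) j * ‖θ (m + 1) j‖ ^ 2 / 2) / γ (m + 1) j := by gcongr
        _ = -(σ (m + 1) j * ‖Φ (m + 1) j t‖ ^ 2 / γ (m + 1) j) / 2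
              + σ (m + 1) j * ‖θ (m + 1) j‖ ^ 2 / γ (m + 1) j / 2 := by
            field_simp
    -- split the (m+1)-sums
    have hsucc : (1 : ℕ) ≤ m + 1 := by omega
    simp only [Finset.sum_Icc_succ_top hsucc]
    -- expression for the derivative value
    have hE : a * z' (m + 1) t / ψ t - a ^ 2 * ψ' t / (2 * (ψ t) ^ 2)
        = (-c₁ * a ^ 2 / ψ t - a ^ 2 * ψ' t / (2 * (ψ t) ^ 2))
          + a * z (m + 2) t
          + a * ∑ j ∈ Finset.Icc 1 R, ρ j t * (inner ℝ (Φ (m + 1) j t) (ζ j t) : ℝ)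
          + (-(a * δ t) - k (m + 1) * a ^ 2)
          - a * z m t := by
      rw [hdyn t ht]
      field_simp
      ring
    have hmulsum : a * ∑ j ∈ Finset.Icc 1 R, ρ j t * (inner ℝ (Φ (m + 1) j t) (ζ j t) : ℝ)
        = ∑ j ∈ Finset.Icc 1 R, a * (ρ j t * (inner ℝ (Φ (m + 1) j t) (ζ j t) : ℝ)) :=
      Finset.mul_sum _ _ _
    have hsum1 : ∑ j ∈ Finset.Icc 1 R,
          ((inner ℝ (Φ' (m + 1) j t) (Φ (m + 1) j t) : ℝ) / γ (m + 1) j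
            + a * (ρ j t * (inner ℝ (Φ (m + 1) j t) (ζ j t) : ℝ)))
        = (∑ j ∈ Finset.Icc 1 R,
            (inner ℝ (Φ' (m + 1) j t) (Φ (m + 1) j t) : ℝ) / γ (m + 1) j)
          + ∑ j ∈ Finset.Icc 1 R, a * (ρ j t * (inner ℝ (Φ (m + 1) j t) (ζ j t) : ℝ)) :=
      Finset.sum_add_distrib
    have hsum2 : ∑ j ∈ Finset.Icc 1 R,
          (-(σ (m + 1) j * ‖Φ (m + 1) j t‖ ^ 2 / γ (m + 1) j) / 2
            + σ (m + 1) j * ‖θ (m + 1) j‖ ^ 2 / γ (m + 1) j / 2)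
        = -(1 / 2) * (∑ j ∈ Finset.Icc 1 R, σ (m + 1) j * ‖Φ (m + 1) j t‖ ^ 2 / γ (m + 1) j)
          + (1 / 2) * ∑ j ∈ Finset.Icc 1 R, σ (m + 1) j * ‖θ (m + 1) j‖ ^ 2 / γ (m + 1) j := by
      rw [Finset.sum_add_distrib]
      congr 1
      · rw [Finset.mul_sum]; apply Finset.sum_congr rfl; intro j hj; ring
      · rw [Finset.mul_sum]; apply Finset.sum_congr rfl; intro j hj; ring
    have hU1 := hU' t ht
    linarith [hA, hB, hC, hU1, hE, hmulsum, hsum1, hsum2]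
end

section
/- Transient L∞ bound with trajectory initialization: under the transformed closed-loop system assumptions, if additionally z_i(0) = 0 for all i = 1,…,n, then for every t ≥ 0, Σ_{i=1}^n z_i(t)² ≤ 2 ψ̄_M W_d/β_d + ψ̄_M (Σ_{i=1}^n Σ_{j=1}^R ‖Φ_{i,j}(0)‖²/γ_{i,j}) e^{−β_d t}. -/
lemma termA {βd cv ψd ψl ψv ψ'v zv : ℝ} (hψl : 0 < ψl) (hψ : ψl ≤ ψv)
    (hψ' : |ψ'v| ≤ ψd) (hb : βd/2 ≤ cv - ψd/(2*ψl)) :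
    -cv * zv^2/ψv - zv^2*ψ'v/(2*ψv^2) ≤ -(βd/2) * (zv^2/ψv) := by
  have hψv : 0 < ψv := lt_of_lt_of_le hψl hψ
  have h1 : -ψd ≤ ψ'v := neg_le_of_abs_le hψ'
  have hd : 0 ≤ ψd := le_trans (abs_nonneg _) hψ'
  have h3 : ψd/(2*ψl) ≤ cv - βd/2 := by linarith
  have h4 : ψd ≤ (cv - βd/2)*(2*ψl) := by
    rw [div_le_iff₀ (by positivity)] at h3; linarith
  have h5 : 0 ≤ cv - βd/2 := by nlinarith
  have hnum : 0 ≤ (cv - βd/2) * (2*ψv) + ψ'v := by nlinarith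
  have heq : -(βd/2) * (zv^2/ψv) - (-cv * zv^2/ψv - zv^2*ψ'v/(2*ψv^2))
      = (((cv - βd/2) * (2*ψv) + ψ'v) * zv^2) / (2*ψv^2) := by
    field_simp; ring
  nlinarith [div_nonneg (mul_nonneg hnum (sq_nonneg zv)) (by positivity : (0:ℝ) ≤ 2*ψv^2)]

lemma termB {kv dv zv δv : ℝ} (hk : 0 < kv) (hδ : |δv| ≤ dv) :
    -(zv*δv) - kv*zv^2 ≤ dv^2/(4*kv) := by
  have h1 : -dv ≤ δv := neg_le_of_abs_le hδ
  have h2 : δv ≤ dv := le_of_abs_le hδ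
  rw [le_div_iff₀ (by positivity)]
  rcases le_or_gt 0 zv with hz | hz
  · nlinarith [sq_nonneg (2*kv*zv - dv), mul_nonneg hz (sub_nonneg.2 h1)]
  · nlinarith [sq_nonneg (2*kv*zv + dv), mul_nonneg (le_of_lt (neg_pos.2 hz)) (sub_nonneg.2 h2)]

lemma termC {βd σv γv a b ip : ℝ} (hγ : 0 < γv) (hσ : 0 < σv) (hb : βd ≤ σv)
    (hip : -(b*a) ≤ ip) :
    -(σv/γv)*a^2 - (σv/γv)*ip ≤ -(βd/2)*(a^2/γv) + σv*b^2/(2*γv) := by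
  have hq : (0:ℝ) ≤ σv/γv := by positivity
  have step1 : -(σv/γv)*ip ≤ (σv/γv)*(a*b) := by nlinarith [mul_le_mul_of_nonneg_left hip hq]
  have heq : (-(βd/2)*(a^2/γv) + σv*b^2/(2*γv)) - (-(σv/γv)*a^2 + (σv/γv)*(a*b))
      = ((2*σv-βd)*a^2 + σv*b^2 - 2*σv*(a*b))/(2*γv) := by field_simp; ring
  have hnumer : 0 ≤ (2*σv-βd)*a^2 + σv*b^2 - 2*σv*(a*b) := by nlinarith [sq_nonneg (a-b)]
  nlinarith [div_nonneg hnumer (by positivity : (0:ℝ) ≤ 2*γv)]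

lemma tele_sum (m : ℕ) (f : ℕ → ℝ) :
    ∑ i ∈ Finset.Icc 1 m, (f i * f (i+1) - f i * f (i-1))
      = f m * f (m+1) - f 0 * f 1 := by
  induction m with
  | zero => simp
  | succ m ih =>
    rw [Finset.sum_Icc_succ_top (Nat.le_add_left 1 m), ih]
    simp [Nat.add_sub_cancel]; ring


set_option maxHeartbeats 1000000 in
/-- Transient `L∞` bound with trajectory initialization: under the transformed closed-loop system assumptions, if additionally `zᵢ(0) = 0` for all `i`, then for every `t ≥ 0`, `Σᵢ zᵢ(t)² ≤ 2 ψ̄_M W_d/β_d + ψ̄_M (Σᵢ Σⱼ ‖Φᵢⱼ(0)‖²/γᵢⱼ) e^{−β_d t}`. -/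
theorem transient_Linfty_bound
    (n R : ℕ) (hn : 1 ≤ n) (hR : 1 ≤ R)
    (N : ℕ → ℕ → ℕ)
    (z z' : ℕ → ℝ → ℝ)
    (ψ ψ' : ℕ → ℝ → ℝ)
    (Φ Φ' : (i : ℕ) → (j : ℕ) → ℝ → EuclideanSpace ℝ (Fin (N i j)))
    (ρ : ℕ → ℝ → ℝ)
    (ζ : (i : ℕ) → (j : ℕ) → ℝ → EuclideanSpace ℝ (Fin (N i j)))
    (δ : ℕ → ℝ → ℝ)
    (ψl ψu ψd d k c : ℕ → ℝ)
    (γ σ : ℕ → ℕ → ℝ)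
    (θ : (i : ℕ) → (j : ℕ) → EuclideanSpace ℝ (Fin (N i j)))
    (hψl : ∀ i ∈ Finset.Icc 1 n, 0 < ψl i)
    (hψb : ∀ i ∈ Finset.Icc 1 n, ∀ t : ℝ, 0 ≤ t → ψl i ≤ ψ i t ∧ ψ i t ≤ ψu i)
    (hψd : ∀ i ∈ Finset.Icc 1 n, ∀ t : ℝ, 0 ≤ t → |ψ' i t| ≤ ψd i)
    (hδ : ∀ i ∈ Finset.Icc 1 n, ∀ t : ℝ, 0 ≤ t → |δ i t| ≤ d i)
    (hk : ∀ i ∈ Finset.Icc 1 n, 0 < k i)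
    (hγ : ∀ i ∈ Finset.Icc 1 n, ∀ j ∈ Finset.Icc 1 R, 0 < γ i j)
    (hσ : ∀ i ∈ Finset.Icc 1 n, ∀ j ∈ Finset.Icc 1 R, 0 < σ i j)
    (hc : ∀ i ∈ Finset.Icc 1 n, ψd i / (2 * ψl i) < c i)
    (hzdiff : ∀ i ∈ Finset.Icc 1 n, ∀ t : ℝ, 0 ≤ t → HasDerivAt (z i) (z' i t) t)
    (hψdiff : ∀ i ∈ Finset.Icc 1 n, ∀ t : ℝ, 0 ≤ t → HasDerivAt (ψ i) (ψ' i t) t)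
    (hΦdiff : ∀ i ∈ Finset.Icc 1 n, ∀ j ∈ Finset.Icc 1 R, ∀ t : ℝ, 0 ≤ t →
      HasDerivAt (Φ i j) (Φ' i j t) t)
    (hzzero : ∀ t : ℝ, z 0 t = 0)
    (hztop : ∀ t : ℝ, z (n + 1) t = 0)
    (hdyn : ∀ i ∈ Finset.Icc 1 n, ∀ t : ℝ, 0 ≤ t →
      z' i t = -(c i) * z i t + ψ i t * z (i + 1) t
        + ψ i t * ((∑ j ∈ Finset.Icc 1 R, ρ j t * (inner ℝ (Φ i j t) (ζ i j t) : ℝ)) - δ i t)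
        + ψ i t * (-(k i) * z i t - z (i - 1) t))
    (hadapt : ∀ i ∈ Finset.Icc 1 n, ∀ j ∈ Finset.Icc 1 R, ∀ t : ℝ, 0 ≤ t →
      Φ' i j t = (-(ρ j t) * γ i j * z i t) • ζ i j t - σ i j • (Φ i j t + θ i j))
    (V : ℝ → ℝ)
    (hV : ∀ t : ℝ, V t = (1 / 2) * ∑ i ∈ Finset.Icc 1 n, (z i t) ^ 2 / ψ i t
      + (1 / 2) * ∑ i ∈ Finset.Icc 1 n, ∑ j ∈ Finset.Icc 1 R, ‖Φ i j t‖ ^ 2 / γ i j)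
    (Wd : ℝ)
    (hWd : Wd = ∑ i ∈ Finset.Icc 1 n, (d i) ^ 2 / (4 * k i)
      + (1 / 2) * ∑ i ∈ Finset.Icc 1 n, ∑ j ∈ Finset.Icc 1 R, σ i j * ‖θ i j‖ ^ 2 / γ i j)
    (βd : ℝ)
    (hβd : βd = min
      (2 * ((Finset.Icc 1 n).inf' (Finset.nonempty_Icc.mpr hn)
          (fun i => c i - ψd i / (2 * ψl i)))
        * (((Finset.Icc 1 n).inf' (Finset.nonempty_Icc.mpr hn) ψl)
          / ((Finset.Icc 1 n).sup' (Finset.nonempty_Icc.mpr hn) ψu)))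
      ((Finset.Icc 1 n).inf' (Finset.nonempty_Icc.mpr hn)
        (fun i => (Finset.Icc 1 R).inf' (Finset.nonempty_Icc.mpr hR) (σ i))))
    (ψM : ℝ)
    (hψM : ψM = (Finset.Icc 1 n).sup' (Finset.nonempty_Icc.mpr hn) ψu)
    (hzinit : ∀ i ∈ Finset.Icc 1 n, z i 0 = 0)
    :
    ∀ t : ℝ, 0 ≤ t →
      ∑ i ∈ Finset.Icc 1 n, (z i t) ^ 2
        ≤ 2 * ψM * Wd / βd
          + ψM * (∑ i ∈ Finset.Icc 1 n, ∑ j ∈ Finset.Icc 1 R, ‖Φ i j 0‖ ^ 2 / γ i j)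
            * Real.exp (-βd * t) := by
  have h1n : 1 ∈ Finset.Icc 1 n := by simp [hn]
  have h1R : 1 ∈ Finset.Icc 1 R := by simp [hR]
  have hψpos : ∀ i ∈ Finset.Icc 1 n, ∀ t : ℝ, 0 ≤ t → 0 < ψ i t :=
    fun i hi t ht => lt_of_lt_of_le (hψl i hi) (hψb i hi t ht).1
  -- positivity of the pieces of βd
  have hcb_pos : 0 < (Finset.Icc 1 n).inf' (Finset.nonempty_Icc.mpr hn)
      (fun i => c i - ψd i / (2 * ψl i)) := by
    rw [Finset.lt_inf'_iff]
    exact fun b hb => sub_pos.2 (hc b hb)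
  have hψlmin_pos : 0 < (Finset.Icc 1 n).inf' (Finset.nonempty_Icc.mpr hn) ψl := by
    rw [Finset.lt_inf'_iff]; exact hψl
  have hlm_le_um : (Finset.Icc 1 n).inf' (Finset.nonempty_Icc.mpr hn) ψl
      ≤ (Finset.Icc 1 n).sup' (Finset.nonempty_Icc.mpr hn) ψu := by
    refine le_trans (Finset.inf'_le _ h1n) (le_trans ?_ (Finset.le_sup' _ h1n))
    exact le_trans (hψb 1 h1n 0 le_rfl).1 (hψb 1 h1n 0 le_rfl).2
  have hum_pos : 0 < (Finset.Icc 1 n).sup' (Finset.nonempty_Icc.mpr hn) ψu :=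
    lt_of_lt_of_le hψlmin_pos hlm_le_um
  have hσmin_pos : 0 < (Finset.Icc 1 n).inf' (Finset.nonempty_Icc.mpr hn)
      (fun i => (Finset.Icc 1 R).inf' (Finset.nonempty_Icc.mpr hR) (σ i)) := by
    rw [Finset.lt_inf'_iff]
    intro b hb
    rw [Finset.lt_inf'_iff]
    exact hσ b hb
  have hβd_pos : 0 < βd := by
    rw [hβd, lt_min_iff]
    constructor
    · positivity
    · exact hσmin_pos
  have hratio_le_one : ((Finset.Icc 1 n).inf' (Finset.nonempty_Icc.mpr hn) ψl)
      / ((Finset.Icc 1 n).sup' (Finset.nonempty_Icc.mpr hn) ψu) ≤ 1 :=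
    (div_le_one hum_pos).2 hlm_le_um
  have hβd_le_c : ∀ i ∈ Finset.Icc 1 n, βd / 2 ≤ c i - ψd i / (2 * ψl i) := by
    intro i hi
    have t1 : (Finset.Icc 1 n).inf' (Finset.nonempty_Icc.mpr hn)
        (fun i => c i - ψd i / (2 * ψl i)) ≤ c i - ψd i / (2 * ψl i) :=
      Finset.inf'_le _ hi
    have hX : βd ≤ 2 * ((Finset.Icc 1 n).inf' (Finset.nonempty_Icc.mpr hn)
          (fun i => c i - ψd i / (2 * ψl i)))
        * (((Finset.Icc 1 n).inf' (Finset.nonempty_Icc.mpr hn) ψl)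
          / ((Finset.Icc 1 n).sup' (Finset.nonempty_Icc.mpr hn) ψu)) := by
      rw [hβd]; exact min_le_left _ _
    have hrnn : 0 ≤ ((Finset.Icc 1 n).inf' (Finset.nonempty_Icc.mpr hn) ψl)
        / ((Finset.Icc 1 n).sup' (Finset.nonempty_Icc.mpr hn) ψu) := by positivity
    nlinarith
  have hβd_le_σ : ∀ i ∈ Finset.Icc 1 n, ∀ j ∈ Finset.Icc 1 R, βd ≤ σ i j := by
    intro i hi j hj
    have hX : βd ≤ (Finset.Icc 1 n).inf' (Finset.nonempty_Icc.mpr hn)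
        (fun i => (Finset.Icc 1 R).inf' (Finset.nonempty_Icc.mpr hR) (σ i)) := by
      rw [hβd]; exact min_le_right _ _
    exact le_trans hX (le_trans (Finset.inf'_le _ hi) (Finset.inf'_le _ hj))
  have hψM_ge : ∀ i ∈ Finset.Icc 1 n, ψu i ≤ ψM := by
    intro i hi; rw [hψM]; exact Finset.le_sup' _ hi
  have hψM_pos : 0 < ψM := by rw [hψM]; exact hum_pos
  -- derivative of V
  have hderiv : ∀ t : ℝ, 0 ≤ t → HasDerivAt V
      ((∑ i ∈ Finset.Icc 1 n, (z i t * z' i t / ψ i t - z i t ^ 2 * ψ' i t / (2 * ψ i t ^ 2)))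
        + ∑ i ∈ Finset.Icc 1 n, ∑ j ∈ Finset.Icc 1 R,
            (inner ℝ (Φ' i j t) (Φ i j t) : ℝ) / γ i j) t := by
    intro t ht
    have hfun : V = fun s => (1 / 2) * ∑ i ∈ Finset.Icc 1 n, (z i s) ^ 2 / ψ i s
        + (1 / 2) * ∑ i ∈ Finset.Icc 1 n, ∑ j ∈ Finset.Icc 1 R,
            (inner ℝ (Φ i j s) (Φ i j s) : ℝ) / γ i j := by
      funext s
      rw [hV s]
      simp only [real_inner_self_eq_norm_sq]
    rw [hfun]
    have h1 : HasDerivAt (fun s => (1 / 2) * ∑ i ∈ Finset.Icc 1 n, (z i s) ^ 2 / ψ i s)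
        ((1 / 2) * ∑ i ∈ Finset.Icc 1 n,
          (((2 : ℕ) : ℝ) * z i t ^ (2 - 1) * z' i t * ψ i t - z i t ^ 2 * ψ' i t) / ψ i t ^ 2) t :=
      HasDerivAt.const_mul _ (HasDerivAt.fun_sum fun i hi =>
        ((hzdiff i hi t ht).pow 2).div (hψdiff i hi t ht) (hψpos i hi t ht).ne')
    have h2 : HasDerivAt (fun s => (1 / 2) * ∑ i ∈ Finset.Icc 1 n, ∑ j ∈ Finset.Icc 1 R,
          (inner ℝ (Φ i j s) (Φ i j s) : ℝ) / γ i j)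
        ((1 / 2) * ∑ i ∈ Finset.Icc 1 n, ∑ j ∈ Finset.Icc 1 R,
          ((inner ℝ (Φ i j t) (Φ' i j t) : ℝ) + (inner ℝ (Φ' i j t) (Φ i j t) : ℝ)) / γ i j) t :=
      HasDerivAt.const_mul _ (HasDerivAt.fun_sum fun i hi => HasDerivAt.fun_sum fun j hj =>
        (((hΦdiff i hi j hj t ht).inner ℝ (hΦdiff i hi j hj t ht)).div_const (γ i j)))
    refine (h1.add h2).congr_deriv ?_
    symm
    rw [Finset.mul_sum, Finset.mul_sum]
    congr 1
    · refine Finset.sum_congr rfl fun i hi => ?_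
      have hne : ψ i t ≠ 0 := (hψpos i hi t ht).ne'
      field_simp
      ring
    · refine Finset.sum_congr rfl fun i hi => ?_
      rw [Finset.mul_sum]
      refine Finset.sum_congr rfl fun j hj => ?_
      rw [real_inner_comm (Φ i j t) (Φ' i j t)]
      ring
  -- key inequality: D t ≤ -βd * V t + Wd
  have hDle : ∀ t : ℝ, 0 ≤ t →
      ((∑ i ∈ Finset.Icc 1 n, (z i t * z' i t / ψ i t - z i t ^ 2 * ψ' i t / (2 * ψ i t ^ 2)))
        + ∑ i ∈ Finset.Icc 1 n, ∑ j ∈ Finset.Icc 1 R,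
            (inner ℝ (Φ' i j t) (Φ i j t) : ℝ) / γ i j) ≤ -βd * V t + Wd := by
    intro t ht
    have e1 : ∀ i ∈ Finset.Icc 1 n,
        z i t * z' i t / ψ i t - z i t ^ 2 * ψ' i t / (2 * ψ i t ^ 2)
        = (-(c i) * z i t ^ 2 / ψ i t - z i t ^ 2 * ψ' i t / (2 * ψ i t ^ 2)
            - z i t * δ i t - k i * z i t ^ 2)
          + (z i t * z (i + 1) t - z i t * z (i - 1) t)
          + ∑ j ∈ Finset.Icc 1 R, ρ j t * z i t * (inner ℝ (Φ i j t) (ζ i j t) : ℝ) := by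
      intro i hi
      have hne : ψ i t ≠ 0 := (hψpos i hi t ht).ne'
      have hP : ∑ j ∈ Finset.Icc 1 R, ρ j t * z i t * (inner ℝ (Φ i j t) (ζ i j t) : ℝ)
          = z i t * ∑ j ∈ Finset.Icc 1 R, ρ j t * (inner ℝ (Φ i j t) (ζ i j t) : ℝ) := by
        rw [Finset.mul_sum]
        exact Finset.sum_congr rfl fun j hj => by ring
      rw [hdyn i hi t ht, hP]
      field_simp
      ring
    have e2 : ∀ i ∈ Finset.Icc 1 n, ∀ j ∈ Finset.Icc 1 R,
        (inner ℝ (Φ' i j t) (Φ i j t) : ℝ) / γ i j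
        = (-(σ i j / γ i j) * ‖Φ i j t‖ ^ 2
            - (σ i j / γ i j) * (inner ℝ (θ i j) (Φ i j t) : ℝ))
          - ρ j t * z i t * (inner ℝ (Φ i j t) (ζ i j t) : ℝ) := by
      intro i hi j hj
      have hγne : γ i j ≠ 0 := (hγ i hi j hj).ne'
      rw [hadapt i hi j hj t ht, inner_sub_left, real_inner_smul_left, real_inner_smul_left,
        inner_add_left, real_inner_self_eq_norm_sq, real_inner_comm (ζ i j t) (Φ i j t)]
      field_simp
      ring
    rw [Finset.sum_congr rfl e1,
      Finset.sum_congr rfl (fun i hi => Finset.sum_congr rfl (e2 i hi))]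
    have etel : ∑ i ∈ Finset.Icc 1 n, (z i t * z (i + 1) t - z i t * z (i - 1) t) = 0 := by
      rw [tele_sum n (fun i => z i t), hztop t, hzzero t]
      ring
    have ecancel :
        (∑ i ∈ Finset.Icc 1 n,
            ((-(c i) * z i t ^ 2 / ψ i t - z i t ^ 2 * ψ' i t / (2 * ψ i t ^ 2)
              - z i t * δ i t - k i * z i t ^ 2)
            + (z i t * z (i + 1) t - z i t * z (i - 1) t)
            + ∑ j ∈ Finset.Icc 1 R, ρ j t * z i t * (inner ℝ (Φ i j t) (ζ i j t) : ℝ)))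
          + ∑ i ∈ Finset.Icc 1 n, ∑ j ∈ Finset.Icc 1 R,
              ((-(σ i j / γ i j) * ‖Φ i j t‖ ^ 2
                - (σ i j / γ i j) * (inner ℝ (θ i j) (Φ i j t) : ℝ))
              - ρ j t * z i t * (inner ℝ (Φ i j t) (ζ i j t) : ℝ))
        = (∑ i ∈ Finset.Icc 1 n,
            (-(c i) * z i t ^ 2 / ψ i t - z i t ^ 2 * ψ' i t / (2 * ψ i t ^ 2)
              - z i t * δ i t - k i * z i t ^ 2))
          + ∑ i ∈ Finset.Icc 1 n, ∑ j ∈ Finset.Icc 1 R,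
              (-(σ i j / γ i j) * ‖Φ i j t‖ ^ 2
                - (σ i j / γ i j) * (inner ℝ (θ i j) (Φ i j t) : ℝ)) := by
      simp only [Finset.sum_add_distrib, Finset.sum_sub_distrib, etel]
      ring
    rw [ecancel]
    have ebound1 : (∑ i ∈ Finset.Icc 1 n,
          (-(c i) * z i t ^ 2 / ψ i t - z i t ^ 2 * ψ' i t / (2 * ψ i t ^ 2)
            - z i t * δ i t - k i * z i t ^ 2))
        ≤ ∑ i ∈ Finset.Icc 1 n,
            (-(βd / 2) * (z i t ^ 2 / ψ i t) + d i ^ 2 / (4 * k i)) := by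
      refine Finset.sum_le_sum fun i hi => ?_
      have hA := termA (hψl i hi) (hψb i hi t ht).1 (hψd i hi t ht) (hβd_le_c i hi)
        (zv := z i t)
      have hB := termB (hk i hi) (hδ i hi t ht) (zv := z i t)
      linarith
    have ebound2 : (∑ i ∈ Finset.Icc 1 n, ∑ j ∈ Finset.Icc 1 R,
          (-(σ i j / γ i j) * ‖Φ i j t‖ ^ 2
            - (σ i j / γ i j) * (inner ℝ (θ i j) (Φ i j t) : ℝ)))
        ≤ ∑ i ∈ Finset.Icc 1 n, ∑ j ∈ Finset.Icc 1 R,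
            (-(βd / 2) * (‖Φ i j t‖ ^ 2 / γ i j) + σ i j * ‖θ i j‖ ^ 2 / (2 * γ i j)) := by
      refine Finset.sum_le_sum fun i hi => Finset.sum_le_sum fun j hj => ?_
      have hip : -(‖θ i j‖ * ‖Φ i j t‖) ≤ (inner ℝ (θ i j) (Φ i j t) : ℝ) :=
        neg_le_of_abs_le (abs_real_inner_le_norm _ _)
      exact termC (hγ i hi j hj) (hσ i hi j hj) (hβd_le_σ i hi j hj) hip
    have esum1 : ∑ i ∈ Finset.Icc 1 n,
          (-(βd / 2) * (z i t ^ 2 / ψ i t) + d i ^ 2 / (4 * k i))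
        = -(βd / 2) * (∑ i ∈ Finset.Icc 1 n, z i t ^ 2 / ψ i t)
          + ∑ i ∈ Finset.Icc 1 n, d i ^ 2 / (4 * k i) := by
      rw [Finset.sum_add_distrib, ← Finset.mul_sum]
    have esum2 : ∑ i ∈ Finset.Icc 1 n, ∑ j ∈ Finset.Icc 1 R,
          (-(βd / 2) * (‖Φ i j t‖ ^ 2 / γ i j) + σ i j * ‖θ i j‖ ^ 2 / (2 * γ i j))
        = -(βd / 2) * (∑ i ∈ Finset.Icc 1 n, ∑ j ∈ Finset.Icc 1 R, ‖Φ i j t‖ ^ 2 / γ i j)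
          + (1 / 2) * ∑ i ∈ Finset.Icc 1 n, ∑ j ∈ Finset.Icc 1 R,
              σ i j * ‖θ i j‖ ^ 2 / γ i j := by
      rw [Finset.mul_sum, Finset.mul_sum, ← Finset.sum_add_distrib]
      refine Finset.sum_congr rfl fun i hi => ?_
      rw [Finset.mul_sum, Finset.mul_sum, ← Finset.sum_add_distrib]
      refine Finset.sum_congr rfl fun j hj => ?_
      ring
    calc _ ≤ (∑ i ∈ Finset.Icc 1 n,
            (-(βd / 2) * (z i t ^ 2 / ψ i t) + d i ^ 2 / (4 * k i)))
          + ∑ i ∈ Finset.Icc 1 n, ∑ j ∈ Finset.Icc 1 R,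
            (-(βd / 2) * (‖Φ i j t‖ ^ 2 / γ i j) + σ i j * ‖θ i j‖ ^ 2 / (2 * γ i j)) :=
        add_le_add ebound1 ebound2
      _ = -βd * V t + Wd := by
        rw [esum1, esum2, hV t, hWd]
        ring
  -- Gronwall argument
  have hWd_nonneg : 0 ≤ Wd := by
    rw [hWd]
    have t1 : 0 ≤ ∑ i ∈ Finset.Icc 1 n, d i ^ 2 / (4 * k i) :=
      Finset.sum_nonneg fun i hi => div_nonneg (sq_nonneg _) (by have := hk i hi; positivity)
    have t2 : 0 ≤ ∑ i ∈ Finset.Icc 1 n, ∑ j ∈ Finset.Icc 1 R,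
        σ i j * ‖θ i j‖ ^ 2 / γ i j :=
      Finset.sum_nonneg fun i hi => Finset.sum_nonneg fun j hj =>
        div_nonneg (mul_nonneg (hσ i hi j hj).le (sq_nonneg _)) (hγ i hi j hj).le
    linarith
  have hg : ∀ x ∈ Set.Ici (0:ℝ), HasDerivAt (fun s => (V s - Wd / βd) * Real.exp (βd * s))
      (((∑ i ∈ Finset.Icc 1 n, (z i x * z' i x / ψ i x - z i x ^ 2 * ψ' i x / (2 * ψ i x ^ 2)))
        + ∑ i ∈ Finset.Icc 1 n, ∑ j ∈ Finset.Icc 1 R,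
            (inner ℝ (Φ' i j x) (Φ i j x) : ℝ) / γ i j) * Real.exp (βd * x)
        + (V x - Wd / βd) * (Real.exp (βd * x) * (βd * 1))) x := by
    intro x hx
    exact ((hderiv x hx).sub_const _).mul (((hasDerivAt_id x).const_mul βd).exp)
  have hganti : AntitoneOn (fun s => (V s - Wd / βd) * Real.exp (βd * s)) (Set.Ici 0) := by
    apply antitoneOn_of_deriv_nonpos (convex_Ici 0)
    · exact fun x hx => (hg x hx).continuousAt.continuousWithinAt
    · intro x hx
      rw [interior_Ici] at hx
      exact (hg x (Set.mem_Ici.mpr (le_of_lt hx))).differentiableAt.differentiableWithinAt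
    · intro x hx
      rw [interior_Ici] at hx
      rw [(hg x (Set.mem_Ici.mpr (le_of_lt hx))).deriv]
      have hle := hDle x (le_of_lt hx)
      have hE : 0 < Real.exp (βd * x) := Real.exp_pos _
      have hWdeq : βd * (Wd / βd) = Wd := by field_simp
      nlinarith [mul_le_mul_of_nonneg_right hle hE.le]
    -- end
  intro t ht
  have hVt : V t ≤ Wd / βd + V 0 * Real.exp (-βd * t) := by
    have h := hganti (Set.self_mem_Ici) (Set.mem_Ici.mpr ht) ht
    simp only [mul_zero, Real.exp_zero, mul_one] at h
    have hE : 0 < Real.exp (βd * t) := Real.exp_pos _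
    have hE1 : 1 ≤ Real.exp (βd * t) := Real.one_le_exp (mul_nonneg hβd_pos.le ht)
    have hwb : 0 ≤ Wd / βd := div_nonneg hWd_nonneg hβd_pos.le
    have h2 : V t * Real.exp (βd * t) ≤ Wd / βd * Real.exp (βd * t) + V 0 := by nlinarith
    have hinv : Real.exp (-βd * t) = 1 / Real.exp (βd * t) := by
      rw [neg_mul, Real.exp_neg, one_div]
    rw [hinv]
    calc V t = V t * Real.exp (βd * t) / Real.exp (βd * t) := by field_simp
      _ ≤ (Wd / βd * Real.exp (βd * t) + V 0) / Real.exp (βd * t) := by gcongr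
      _ = Wd / βd + V 0 * (1 / Real.exp (βd * t)) := by field_simp
  have hV0 : V 0 = (1 / 2) * ∑ i ∈ Finset.Icc 1 n, ∑ j ∈ Finset.Icc 1 R,
      ‖Φ i j 0‖ ^ 2 / γ i j := by
    rw [hV 0]
    have : ∑ i ∈ Finset.Icc 1 n, (z i 0) ^ 2 / ψ i 0 = 0 :=
      Finset.sum_eq_zero fun i hi => by rw [hzinit i hi]; simp
    rw [this]; ring
  have hzsum : ∑ i ∈ Finset.Icc 1 n, (z i t) ^ 2
      ≤ ψM * ∑ i ∈ Finset.Icc 1 n, (z i t) ^ 2 / ψ i t := by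
    rw [Finset.mul_sum]
    refine Finset.sum_le_sum fun i hi => ?_
    have hpos := hψpos i hi t ht
    have hle : ψ i t ≤ ψM := le_trans (hψb i hi t ht).2 (hψM_ge i hi)
    have := mul_le_mul_of_nonneg_left hle (div_nonneg (sq_nonneg (z i t)) hpos.le)
    calc (z i t) ^ 2 = (z i t) ^ 2 / ψ i t * ψ i t := by field_simp
      _ ≤ (z i t) ^ 2 / ψ i t * ψM := this
      _ = ψM * ((z i t) ^ 2 / ψ i t) := by ring
  have hΦ0_nonneg : 0 ≤ ∑ i ∈ Finset.Icc 1 n, ∑ j ∈ Finset.Icc 1 R,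
      ‖Φ i j t‖ ^ 2 / γ i j :=
    Finset.sum_nonneg fun i hi => Finset.sum_nonneg fun j hj =>
      div_nonneg (sq_nonneg _) (hγ i hi j hj).le
  have hexpand : 2 * ψM * V t = ψM * (∑ i ∈ Finset.Icc 1 n, (z i t) ^ 2 / ψ i t)
      + ψM * (∑ i ∈ Finset.Icc 1 n, ∑ j ∈ Finset.Icc 1 R, ‖Φ i j t‖ ^ 2 / γ i j) := by
    rw [hV t]; ring
  have hzV : ∑ i ∈ Finset.Icc 1 n, (z i t) ^ 2 ≤ 2 * ψM * V t := by
    rw [hexpand]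
    nlinarith [mul_nonneg hψM_pos.le hΦ0_nonneg]
  have hfinal : 2 * ψM * (Wd / βd + V 0 * Real.exp (-βd * t))
      = 2 * ψM * Wd / βd
        + ψM * (∑ i ∈ Finset.Icc 1 n, ∑ j ∈ Finset.Icc 1 R, ‖Φ i j 0‖ ^ 2 / γ i j)
          * Real.exp (-βd * t) := by
    rw [hV0]; ring
  have := mul_le_mul_of_nonneg_left hVt (by positivity : (0:ℝ) ≤ 2 * ψM)
  linarith
end

section
/- Ultimate tracking-error bound: under the transformed closed-loop system assumptions, for every ε > 0 there exists T ≥ 0 such that |z_1(t)| ≤ √(2 ψ̄_M W_d/β_d) + ε for all t ≥ T. (In the tracking problem z_1 = x_1 − x_{r1} is the tracking error, so the tracking error converges to a neighborhood of zero of size √(2 ψ̄_M W_d/β_d).) -/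
open Finset

lemma telescope_aux_s10 (z : ℕ → ℝ) (hz0 : z 0 = 0) :
    ∀ m : ℕ, ∑ i ∈ Finset.Icc 1 m, (z i * z (i+1) - z i * z (i-1)) = z m * z (m+1) := by
  intro m
  induction m with
  | zero => simp [hz0]
  | succ m ih =>
      rw [Finset.sum_Icc_succ_top (by omega : 1 ≤ m + 1), ih]
      simp only [Nat.add_sub_cancel]
      ring

lemma sqrt_add_le_aux {x y : ℝ} (hx : 0 ≤ x) (hy : 0 ≤ y) :
    Real.sqrt (x + y) ≤ Real.sqrt x + Real.sqrt y := by
  have h := Real.sqrt_nonneg x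
  have h' := Real.sqrt_nonneg y
  have hx2 := Real.sq_sqrt hx
  have hy2 := Real.sq_sqrt hy
  have : x + y ≤ (Real.sqrt x + Real.sqrt y) ^ 2 := by nlinarith [mul_nonneg h h']
  calc Real.sqrt (x + y) ≤ Real.sqrt ((Real.sqrt x + Real.sqrt y) ^ 2) := Real.sqrt_le_sqrt this
    _ = Real.sqrt x + Real.sqrt y := Real.sqrt_sq (by linarith)

lemma gronwall_aux (V D : ℝ → ℝ) (β W : ℝ) (hβ : 0 < β)
    (hd : ∀ t : ℝ, 0 ≤ t → HasDerivAt V (D t) t)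
    (hb : ∀ t : ℝ, 0 ≤ t → D t ≤ -β * V t + W) :
    ∀ t : ℝ, 0 ≤ t → V t ≤ W / β + (V 0 - W / β) * Real.exp (-β * t) := by
  set K := W / β with hK
  set g : ℝ → ℝ := fun t => (V t - K) * Real.exp (β * t) with hg
  have hgd : ∀ t : ℝ, 0 ≤ t →
      HasDerivAt g (D t * Real.exp (β * t) + (V t - K) * (Real.exp (β * t) * β)) t := by
    intro t ht
    have h1 : HasDerivAt (fun s : ℝ => Real.exp (β * s)) (Real.exp (β * t) * β) t := by
      simpa using (((hasDerivAt_id t).const_mul β).exp)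
    exact ((hd t ht).sub_const K).mul h1
  have hanti : AntitoneOn g (Set.Ici 0) := by
    apply antitoneOn_of_deriv_nonpos (convex_Ici 0)
    · intro t ht
      exact (hgd t ht).continuousAt.continuousWithinAt
    · intro t ht
      rw [interior_Ici] at ht
      exact (hgd t (le_of_lt ht)).differentiableAt.differentiableWithinAt
    · intro t ht
      rw [interior_Ici] at ht
      rw [(hgd t (le_of_lt ht)).deriv]
      have h1 : D t + β * (V t - K) ≤ 0 := by
        have := hb t (le_of_lt ht)
        have hW : β * K = W := by rw [hK]; field_simp
        nlinarith
      have h2 : (0:ℝ) < Real.exp (β * t) := Real.exp_pos _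
      nlinarith
  intro t ht
  have := hanti (Set.self_mem_Ici) (Set.mem_Ici.mpr ht) ht
  have hg0 : g 0 = V 0 - K := by simp [hg]
  rw [hg0] at this
  have h3 : V t - K ≤ (V 0 - K) * Real.exp (-β * t) := by
    have := mul_le_mul_of_nonneg_right this (Real.exp_nonneg (-β * t))
    rw [hg] at this
    simp only at this
    rw [mul_assoc, ← Real.exp_add] at this
    simpa using this
  linarith

set_option maxHeartbeats 2000000 in
/-- Ultimate tracking-error bound: under the transformed closed-loop system assumptions, for every `ε > 0` there exists `T ≥ 0` such that `|z₁(t)| ≤ √(2 ψ̄_M W_d/β_d) + ε` for all `t ≥ T`. -/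
theorem ultimate_tracking_error_bound
    (n R : ℕ) (hn : 1 ≤ n) (hR : 1 ≤ R)
    (N : ℕ → ℕ → ℕ)
    (z z' : ℕ → ℝ → ℝ)
    (ψ ψ' : ℕ → ℝ → ℝ)
    (Φ Φ' : (i : ℕ) → (j : ℕ) → ℝ → EuclideanSpace ℝ (Fin (N i j)))
    (ρ : ℕ → ℝ → ℝ)
    (ζ : (i : ℕ) → (j : ℕ) → ℝ → EuclideanSpace ℝ (Fin (N i j)))
    (δ : ℕ → ℝ → ℝ)
    (ψl ψu ψd d k c : ℕ → ℝ)
    (γ σ : ℕ → ℕ → ℝ)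
    (θ : (i : ℕ) → (j : ℕ) → EuclideanSpace ℝ (Fin (N i j)))
    (hψl : ∀ i ∈ Finset.Icc 1 n, 0 < ψl i)
    (hψb : ∀ i ∈ Finset.Icc 1 n, ∀ t : ℝ, 0 ≤ t → ψl i ≤ ψ i t ∧ ψ i t ≤ ψu i)
    (hψd : ∀ i ∈ Finset.Icc 1 n, ∀ t : ℝ, 0 ≤ t → |ψ' i t| ≤ ψd i)
    (hδ : ∀ i ∈ Finset.Icc 1 n, ∀ t : ℝ, 0 ≤ t → |δ i t| ≤ d i)
    (hk : ∀ i ∈ Finset.Icc 1 n, 0 < k i)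
    (hγ : ∀ i ∈ Finset.Icc 1 n, ∀ j ∈ Finset.Icc 1 R, 0 < γ i j)
    (hσ : ∀ i ∈ Finset.Icc 1 n, ∀ j ∈ Finset.Icc 1 R, 0 < σ i j)
    (hc : ∀ i ∈ Finset.Icc 1 n, ψd i / (2 * ψl i) < c i)
    (hzdiff : ∀ i ∈ Finset.Icc 1 n, ∀ t : ℝ, 0 ≤ t → HasDerivAt (z i) (z' i t) t)
    (hψdiff : ∀ i ∈ Finset.Icc 1 n, ∀ t : ℝ, 0 ≤ t → HasDerivAt (ψ i) (ψ' i t) t)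
    (hΦdiff : ∀ i ∈ Finset.Icc 1 n, ∀ j ∈ Finset.Icc 1 R, ∀ t : ℝ, 0 ≤ t →
      HasDerivAt (Φ i j) (Φ' i j t) t)
    (hzzero : ∀ t : ℝ, z 0 t = 0)
    (hztop : ∀ t : ℝ, z (n + 1) t = 0)
    (hdyn : ∀ i ∈ Finset.Icc 1 n, ∀ t : ℝ, 0 ≤ t →
      z' i t = -(c i) * z i t + ψ i t * z (i + 1) t
        + ψ i t * ((∑ j ∈ Finset.Icc 1 R, ρ j t * (inner ℝ (Φ i j t) (ζ i j t) : ℝ)) - δ i t)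
        + ψ i t * (-(k i) * z i t - z (i - 1) t))
    (hadapt : ∀ i ∈ Finset.Icc 1 n, ∀ j ∈ Finset.Icc 1 R, ∀ t : ℝ, 0 ≤ t →
      Φ' i j t = (-(ρ j t) * γ i j * z i t) • ζ i j t - σ i j • (Φ i j t + θ i j))
    (V : ℝ → ℝ)
    (hV : ∀ t : ℝ, V t = (1 / 2) * ∑ i ∈ Finset.Icc 1 n, (z i t) ^ 2 / ψ i t
      + (1 / 2) * ∑ i ∈ Finset.Icc 1 n, ∑ j ∈ Finset.Icc 1 R, ‖Φ i j t‖ ^ 2 / γ i j)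
    (Wd : ℝ)
    (hWd : Wd = ∑ i ∈ Finset.Icc 1 n, (d i) ^ 2 / (4 * k i)
      + (1 / 2) * ∑ i ∈ Finset.Icc 1 n, ∑ j ∈ Finset.Icc 1 R, σ i j * ‖θ i j‖ ^ 2 / γ i j)
    (βd : ℝ)
    (hβd : βd = min
      (2 * ((Finset.Icc 1 n).inf' (Finset.nonempty_Icc.mpr hn)
          (fun i => c i - ψd i / (2 * ψl i)))
        * (((Finset.Icc 1 n).inf' (Finset.nonempty_Icc.mpr hn) ψl)
          / ((Finset.Icc 1 n).sup' (Finset.nonempty_Icc.mpr hn) ψu)))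
      ((Finset.Icc 1 n).inf' (Finset.nonempty_Icc.mpr hn)
        (fun i => (Finset.Icc 1 R).inf' (Finset.nonempty_Icc.mpr hR) (σ i))))
    (ψM : ℝ)
    (hψM : ψM = (Finset.Icc 1 n).sup' (Finset.nonempty_Icc.mpr hn) ψu)
    :
    ∀ ε : ℝ, 0 < ε → ∃ T : ℝ, 0 ≤ T ∧ ∀ t : ℝ, T ≤ t →
      |z 1 t| ≤ Real.sqrt (2 * ψM * Wd / βd) + ε := by
  intro ε hε
  have hneN : (Finset.Icc 1 n).Nonempty := Finset.nonempty_Icc.mpr hn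
  have hneR : (Finset.Icc 1 R).Nonempty := Finset.nonempty_Icc.mpr hR
  have h1n : (1:ℕ) ∈ Finset.Icc 1 n := by simp [hn]
  -- positivity of constants
  obtain ⟨c0, hc0def⟩ : ∃ x : ℝ, x = (Finset.Icc 1 n).inf' hneN
      (fun i => c i - ψd i / (2 * ψl i)) := ⟨_, rfl⟩
  obtain ⟨ψmin, hψmindef⟩ : ∃ x : ℝ, x = (Finset.Icc 1 n).inf' hneN ψl := ⟨_, rfl⟩
  obtain ⟨ψmax, hψmaxdef⟩ : ∃ x : ℝ, x = (Finset.Icc 1 n).sup' hneN ψu := ⟨_, rfl⟩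
  obtain ⟨σ0, hσ0def⟩ : ∃ x : ℝ, x = (Finset.Icc 1 n).inf' hneN
      (fun i => (Finset.Icc 1 R).inf' hneR (σ i)) := ⟨_, rfl⟩
  rw [show ((Finset.nonempty_Icc).mpr hn : (Finset.Icc 1 n).Nonempty) = hneN from rfl,
    show ((Finset.nonempty_Icc).mpr hR : (Finset.Icc 1 R).Nonempty) = hneR from rfl,
    ← hc0def, ← hψmindef, ← hψmaxdef, ← hσ0def] at hβd
  rw [show ((Finset.nonempty_Icc).mpr hn : (Finset.Icc 1 n).Nonempty) = hneN from rfl,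
    ← hψmaxdef] at hψM
  have hc0pos : 0 < c0 := by
    rw [hc0def, Finset.lt_inf'_iff]
    intro i hi
    have := hc i hi
    linarith
  have hψminpos : 0 < ψmin := by
    rw [hψmindef, Finset.lt_inf'_iff]
    intro i hi; exact hψl i hi
  have hψu1 : ψl 1 ≤ ψu 1 := le_trans (hψb 1 h1n 0 le_rfl).1 (hψb 1 h1n 0 le_rfl).2
  have hψmaxpos : 0 < ψmax := by
    have h1 : ψu 1 ≤ ψmax := by rw [hψmaxdef]; exact Finset.le_sup' ψu h1n
    have := hψl 1 h1n
    linarith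
  have hψm1 : ψmin / ψmax ≤ 1 := by
    rw [div_le_one hψmaxpos]
    calc ψmin ≤ ψl 1 := by rw [hψmindef]; exact Finset.inf'_le _ h1n
      _ ≤ ψu 1 := hψu1
      _ ≤ ψmax := by rw [hψmaxdef]; exact Finset.le_sup' ψu h1n
  have hσ0pos : 0 < σ0 := by
    rw [hσ0def, Finset.lt_inf'_iff]
    intro i hi
    rw [Finset.lt_inf'_iff]
    intro j hj; exact hσ i hi j hj
  have hβdpos : 0 < βd := by
    rw [hβd]
    exact lt_min (mul_pos (mul_pos two_pos hc0pos) (div_pos hψminpos hψmaxpos)) hσ0pos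
  have hβσ : ∀ i ∈ Finset.Icc 1 n, ∀ j ∈ Finset.Icc 1 R, βd ≤ σ i j := by
    intro i hi j hj
    calc βd ≤ σ0 := by rw [hβd]; exact min_le_right _ _
      _ ≤ (Finset.Icc 1 R).inf' hneR (σ i) := by rw [hσ0def]; exact Finset.inf'_le _ hi
      _ ≤ σ i j := Finset.inf'_le _ hj
  have hβc : ∀ i ∈ Finset.Icc 1 n, βd / 2 ≤ c i - ψd i / (2 * ψl i) := by
    intro i hi
    have h1 : βd ≤ 2 * c0 * (ψmin / ψmax) := by rw [hβd]; exact min_le_left _ _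
    have h2 : 2 * c0 * (ψmin / ψmax) ≤ 2 * c0 := by nlinarith [div_pos hψminpos hψmaxpos]
    have h3 : c0 ≤ c i - ψd i / (2 * ψl i) := by rw [hc0def]; exact Finset.inf'_le _ hi
    linarith
  have hψMpos : 0 < ψM := by rw [hψM]; exact hψmaxpos
  have hd0 : ∀ i ∈ Finset.Icc 1 n, 0 ≤ d i :=
    fun i hi => le_trans (abs_nonneg _) (hδ i hi 0 le_rfl)
  have hWd0 : 0 ≤ Wd := by
    rw [hWd]
    have h1 : (0:ℝ) ≤ ∑ i ∈ Finset.Icc 1 n, d i ^ 2 / (4 * k i) := by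
      apply Finset.sum_nonneg
      intro i hi
      have := hk i hi
      positivity
    have h2 : (0:ℝ) ≤ ∑ i ∈ Finset.Icc 1 n, ∑ j ∈ Finset.Icc 1 R,
        σ i j * ‖θ i j‖ ^ 2 / γ i j := by
      apply Finset.sum_nonneg; intro i hi
      apply Finset.sum_nonneg; intro j hj
      have := hσ i hi j hj
      have := hγ i hi j hj
      positivity
    linarith
  -- the Lyapunov function and its derivative
  obtain ⟨VV, hVV⟩ : ∃ f : ℝ → ℝ, f = fun s =>
      (∑ i ∈ Finset.Icc 1 n, (1/2) * (z i s ^ 2 / ψ i s))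
      + ∑ i ∈ Finset.Icc 1 n, ∑ j ∈ Finset.Icc 1 R, (1/2) * (‖Φ i j s‖ ^ 2 / γ i j) :=
    ⟨_, rfl⟩
  obtain ⟨D, hD⟩ : ∃ f : ℝ → ℝ, f = fun s =>
      (∑ i ∈ Finset.Icc 1 n, (1/2) * (((z' i s * z i s + z i s * z' i s) * ψ i s
          - z i s * z i s * ψ' i s) / ψ i s ^ 2))
      + ∑ i ∈ Finset.Icc 1 n, ∑ j ∈ Finset.Icc 1 R,
          (1/2) * (((inner ℝ (Φ i j s) (Φ' i j s) : ℝ) + (inner ℝ (Φ' i j s) (Φ i j s) : ℝ)) / γ i j) :=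
    ⟨_, rfl⟩
  have hψpos : ∀ i ∈ Finset.Icc 1 n, ∀ t : ℝ, 0 ≤ t → 0 < ψ i t := by
    intro i hi t ht
    exact lt_of_lt_of_le (hψl i hi) (hψb i hi t ht).1
  have hVVd : ∀ t : ℝ, 0 ≤ t → HasDerivAt VV (D t) t := by
    intro t ht
    rw [hVV, hD]
    dsimp only
    apply HasDerivAt.add
    · apply HasDerivAt.fun_sum
      intro i hi
      have hp : ψ i t ≠ 0 := ne_of_gt (hψpos i hi t ht)
      have h := (((hzdiff i hi t ht).mul (hzdiff i hi t ht)).div (hψdiff i hi t ht) hp).const_mul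
        (1/2 : ℝ)
      have heq : (fun s => (1/2 : ℝ) * (z i s * z i s / ψ i s))
          = fun s => (1/2 : ℝ) * (z i s ^ 2 / ψ i s) := by
        funext s; ring
      simp only [Pi.mul_apply, Pi.div_apply] at h
      rwa [heq] at h
    · apply HasDerivAt.fun_sum
      intro i hi
      apply HasDerivAt.fun_sum
      intro j hj
      have h := ((HasDerivAt.inner ℝ (hΦdiff i hi j hj t ht) (hΦdiff i hi j hj t ht)).div_const
        (γ i j)).const_mul (1/2 : ℝ)
      have heq : (fun s => (1/2 : ℝ) * ((inner ℝ (Φ i j s) (Φ i j s) : ℝ) / γ i j))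
          = fun s => (1/2 : ℝ) * (‖Φ i j s‖ ^ 2 / γ i j) := by
        funext s
        rw [real_inner_self_eq_norm_sq]
      rwa [heq] at h
  have hbound : ∀ t : ℝ, 0 ≤ t → D t ≤ -βd * VV t + Wd := by
    intro t ht
    rw [hD, hVV]
    dsimp only
    have key : ∀ i ∈ Finset.Icc 1 n,
        (1/2) * (((z' i t * z i t + z i t * z' i t) * ψ i t
            - z i t * z i t * ψ' i t) / ψ i t ^ 2)
        + ∑ j ∈ Finset.Icc 1 R,
            (1/2) * (((inner ℝ (Φ i j t) (Φ' i j t) : ℝ)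
              + (inner ℝ (Φ' i j t) (Φ i j t) : ℝ)) / γ i j)
        ≤ -βd * ((1/2) * (z i t ^ 2 / ψ i t))
          + ∑ j ∈ Finset.Icc 1 R, (-βd * ((1/2) * (‖Φ i j t‖ ^ 2 / γ i j))
              + (1/2) * (σ i j * ‖θ i j‖ ^ 2 / γ i j))
          + d i ^ 2 / (4 * k i)
          + (z i t * z (i + 1) t - z i t * z (i - 1) t) := by
      intro i hi
      have hp0 : 0 < ψ i t := hψpos i hi t ht
      have hpne : ψ i t ≠ 0 := ne_of_gt hp0
      have hψlpos := hψl i hi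
      have hpl : ψl i ≤ ψ i t := (hψb i hi t ht).1
      have hψd' := abs_le.mp (hψd i hi t ht)
      have hψdnn : 0 ≤ ψd i := le_trans (abs_nonneg _) (hψd i hi t ht)
      have hk0 := hk i hi
      have hδ' := abs_le.mp (hδ i hi t ht)
      have hdd := hd0 i hi
      -- inequality I1
      have hq : 0 ≤ z i t ^ 2 / ψ i t := by positivity
      have d1 : -(z i t ^ 2 * ψ' i t / (2 * ψ i t ^ 2))
          ≤ (ψd i / (2 * ψl i)) * (z i t ^ 2 / ψ i t) := by
        have h1 : -(z i t ^ 2 * ψ' i t) ≤ z i t ^ 2 * ψd i := by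
          have hz2 : (0:ℝ) ≤ (ψd i + ψ' i t) * z i t ^ 2 :=
            mul_nonneg (by linarith only [hψd'.1]) (sq_nonneg _)
          linarith only [hz2]
        have h2 : (0:ℝ) < 2 * ψl i * ψ i t := by positivity
        have h3 : 2 * ψl i * ψ i t ≤ 2 * ψ i t ^ 2 := by
          have := mul_nonneg (sub_nonneg.mpr hpl) hp0.le
          linarith only [this]
        have h4 : (0:ℝ) ≤ z i t ^ 2 * ψd i := by positivity
        have h5 : -(z i t ^ 2 * ψ' i t) / (2 * ψ i t ^ 2)
            ≤ z i t ^ 2 * ψd i / (2 * ψl i * ψ i t) := div_le_div₀ h4 h1 h2 h3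
        have h6 : z i t ^ 2 * ψd i / (2 * ψl i * ψ i t)
            = (ψd i / (2 * ψl i)) * (z i t ^ 2 / ψ i t) := by
          field_simp
        rw [h6] at h5
        calc -(z i t ^ 2 * ψ' i t / (2 * ψ i t ^ 2))
            = -(z i t ^ 2 * ψ' i t) / (2 * ψ i t ^ 2) := by ring
          _ ≤ _ := h5
      have I1 : -(c i) * (z i t ^ 2 / ψ i t) - z i t ^ 2 * ψ' i t / (2 * ψ i t ^ 2)
          ≤ -βd * ((1/2) * (z i t ^ 2 / ψ i t)) := by
        have hcb := hβc i hi
        have h7 : 0 ≤ (c i - ψd i / (2 * ψl i) - βd / 2) * (z i t ^ 2 / ψ i t) :=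
          mul_nonneg (by linarith only [hcb]) hq
        linarith only [d1, h7]
      -- inequality I2
      have I2 : -(z i t * δ i t) - k i * z i t ^ 2 ≤ d i ^ 2 / (4 * k i) := by
        rw [le_div_iff₀ (by positivity : (0:ℝ) < 4 * k i)]
        have hb1 := sq_nonneg (δ i t + 2 * k i * z i t)
        have hb2 := mul_nonneg (sub_nonneg.mpr hδ'.2)
          (by linarith only [hδ'.1, hdd] : (0:ℝ) ≤ d i + δ i t)
        linarith only [hb1, hb2]
      -- inequality I3
      have I3 : ∀ j ∈ Finset.Icc 1 R,
          -((σ i j / γ i j) * (‖Φ i j t‖ ^ 2 + (inner ℝ (θ i j) (Φ i j t) : ℝ)))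
          ≤ -βd * ((1/2) * (‖Φ i j t‖ ^ 2 / γ i j))
            + (1/2) * (σ i j * ‖θ i j‖ ^ 2 / γ i j) := by
        intro j hj
        have hγ0 : 0 < γ i j := hγ i hi j hj
        have hσ0' : 0 < σ i j := hσ i hi j hj
        have hβσ' := hβσ i hi j hj
        have hip := abs_le.mp (abs_real_inner_le_norm (θ i j) (Φ i j t))
        have h1 : βd / 2 * ‖Φ i j t‖ ^ 2 - σ i j / 2 * ‖θ i j‖ ^ 2
            ≤ σ i j * (‖Φ i j t‖ ^ 2 + (inner ℝ (θ i j) (Φ i j t) : ℝ)) := by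
          have ha := mul_nonneg hσ0'.le (sq_nonneg (‖θ i j‖ - ‖Φ i j t‖))
          have hb := mul_le_mul_of_nonneg_left hip.1 hσ0'.le
          have hcx := mul_nonneg (sub_nonneg.mpr hβσ') (sq_nonneg ‖Φ i j t‖)
          linarith only [ha, hb, hcx]
        have h2 := (div_le_div_iff_of_pos_right hγ0).mpr h1
        have e1 : -((σ i j / γ i j) * (‖Φ i j t‖ ^ 2 + (inner ℝ (θ i j) (Φ i j t) : ℝ)))
            = -(σ i j * (‖Φ i j t‖ ^ 2 + (inner ℝ (θ i j) (Φ i j t) : ℝ)) / γ i j) := by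
          ring
        have e2 : (βd / 2 * ‖Φ i j t‖ ^ 2 - σ i j / 2 * ‖θ i j‖ ^ 2) / γ i j
            = βd * ((1/2) * (‖Φ i j t‖ ^ 2 / γ i j))
              - (1/2) * (σ i j * ‖θ i j‖ ^ 2 / γ i j) := by
          ring
        rw [e2] at h2
        rw [e1]
        linarith only [h2]
      -- substitute the dynamics
      have eA : (1/2) * (((z' i t * z i t + z i t * z' i t) * ψ i t
            - z i t * z i t * ψ' i t) / ψ i t ^ 2)
          = -(c i) * (z i t ^ 2 / ψ i t)
            + (z i t * z (i + 1) t - z i t * z (i - 1) t)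
            + z i t * (∑ j ∈ Finset.Icc 1 R, ρ j t * (inner ℝ (Φ i j t) (ζ i j t) : ℝ))
            - z i t * δ i t - k i * z i t ^ 2
            - z i t ^ 2 * ψ' i t / (2 * ψ i t ^ 2) := by
        rw [hdyn i hi t ht]
        field_simp
        ring
      -- substitute the adaptation law
      have eB : ∀ j ∈ Finset.Icc 1 R,
          (1/2) * (((inner ℝ (Φ i j t) (Φ' i j t) : ℝ)
            + (inner ℝ (Φ' i j t) (Φ i j t) : ℝ)) / γ i j)
          = -(z i t) * (ρ j t * (inner ℝ (Φ i j t) (ζ i j t) : ℝ))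
            - (σ i j / γ i j) * (‖Φ i j t‖ ^ 2 + (inner ℝ (θ i j) (Φ i j t) : ℝ)) := by
        intro j hj
        have hγ0 : γ i j ≠ 0 := ne_of_gt (hγ i hi j hj)
        rw [hadapt i hi j hj t ht]
        simp only [inner_sub_left, inner_sub_right, inner_add_left, inner_add_right,
          real_inner_smul_left, real_inner_smul_right, real_inner_self_eq_norm_sq]
        rw [real_inner_comm (ζ i j t) (Φ i j t), real_inner_comm (Φ i j t) (θ i j)]
        field_simp
        ring
      have eC : ∑ j ∈ Finset.Icc 1 R,
          (1/2) * (((inner ℝ (Φ i j t) (Φ' i j t) : ℝ)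
            + (inner ℝ (Φ' i j t) (Φ i j t) : ℝ)) / γ i j)
          = -(z i t) * (∑ j ∈ Finset.Icc 1 R, ρ j t * (inner ℝ (Φ i j t) (ζ i j t) : ℝ))
            - ∑ j ∈ Finset.Icc 1 R,
              (σ i j / γ i j) * (‖Φ i j t‖ ^ 2 + (inner ℝ (θ i j) (Φ i j t) : ℝ)) := by
        rw [Finset.sum_congr rfl eB, Finset.sum_sub_distrib, ← Finset.mul_sum]
      have I3sum := Finset.sum_le_sum I3
      rw [Finset.sum_neg_distrib] at I3sum
      rw [eA, eC]
      linarith only [I1, I2, I3sum]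
    calc (∑ i ∈ Finset.Icc 1 n, (1/2) * (((z' i t * z i t + z i t * z' i t) * ψ i t
            - z i t * z i t * ψ' i t) / ψ i t ^ 2))
        + ∑ i ∈ Finset.Icc 1 n, ∑ j ∈ Finset.Icc 1 R,
            (1/2) * (((inner ℝ (Φ i j t) (Φ' i j t) : ℝ)
              + (inner ℝ (Φ' i j t) (Φ i j t) : ℝ)) / γ i j)
        = ∑ i ∈ Finset.Icc 1 n,
            ((1/2) * (((z' i t * z i t + z i t * z' i t) * ψ i t
              - z i t * z i t * ψ' i t) / ψ i t ^ 2)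
            + ∑ j ∈ Finset.Icc 1 R,
              (1/2) * (((inner ℝ (Φ i j t) (Φ' i j t) : ℝ)
                + (inner ℝ (Φ' i j t) (Φ i j t) : ℝ)) / γ i j)) := by
          rw [Finset.sum_add_distrib]
      _ ≤ ∑ i ∈ Finset.Icc 1 n,
            (-βd * ((1/2) * (z i t ^ 2 / ψ i t))
            + ∑ j ∈ Finset.Icc 1 R, (-βd * ((1/2) * (‖Φ i j t‖ ^ 2 / γ i j))
                + (1/2) * (σ i j * ‖θ i j‖ ^ 2 / γ i j))
            + d i ^ 2 / (4 * k i)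
            + (z i t * z (i + 1) t - z i t * z (i - 1) t)) := Finset.sum_le_sum key
      _ = -βd * ((∑ i ∈ Finset.Icc 1 n, (1/2) * (z i t ^ 2 / ψ i t))
            + ∑ i ∈ Finset.Icc 1 n, ∑ j ∈ Finset.Icc 1 R,
              (1/2) * (‖Φ i j t‖ ^ 2 / γ i j)) + Wd := by
          have htel : ∑ i ∈ Finset.Icc 1 n,
              (z i t * z (i + 1) t - z i t * z (i - 1) t) = 0 := by
            rw [telescope_aux_s10 (fun i => z i t) (hzzero t) n, hztop t, mul_zero]
          rw [hWd]
          simp only [Finset.sum_add_distrib]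
          rw [htel]
          simp only [mul_add, Finset.mul_sum]
          ring
  -- Gronwall
  have hVle := gronwall_aux VV D βd Wd hβdpos hVVd hbound
  obtain ⟨K, hKdef⟩ : ∃ x : ℝ, x = Wd / βd := ⟨_, rfl⟩
  have hK0 : 0 ≤ K := by rw [hKdef]; exact div_nonneg hWd0 (le_of_lt hβdpos)
  -- z₁² ≤ 2 ψM VV
  have hz1VV : ∀ t : ℝ, 0 ≤ t → z 1 t ^ 2 ≤ 2 * ψM * VV t := by
    intro t ht
    have h1 : (1/2 : ℝ) * (z 1 t ^ 2 / ψ 1 t) ≤ ∑ i ∈ Finset.Icc 1 n,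
        (1/2) * (z i t ^ 2 / ψ i t) := by
      apply Finset.single_le_sum (f := fun i => (1/2 : ℝ) * (z i t ^ 2 / ψ i t)) _ h1n
      intro i hi
      have := hψpos i hi t ht
      positivity
    have h2 : (0:ℝ) ≤ ∑ i ∈ Finset.Icc 1 n, ∑ j ∈ Finset.Icc 1 R,
        (1/2) * (‖Φ i j t‖ ^ 2 / γ i j) := by
      apply Finset.sum_nonneg; intro i hi
      apply Finset.sum_nonneg; intro j hj
      have := hγ i hi j hj
      positivity
    have h3 : z 1 t ^ 2 / ψM ≤ z 1 t ^ 2 / ψ 1 t := by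
      apply div_le_div_of_nonneg_left (sq_nonneg _) (hψpos 1 h1n t ht)
      rw [hψM, hψmaxdef]
      exact le_trans (hψb 1 h1n t ht).2 (Finset.le_sup' ψu h1n)
    have h4 : VV t ≥ (1/2) * (z 1 t ^ 2 / ψ 1 t) := by
      rw [hVV]; dsimp only; linarith
    have h5 : z 1 t ^ 2 / ψM ≤ 2 * VV t := by linarith
    calc z 1 t ^ 2 = ψM * (z 1 t ^ 2 / ψM) := by field_simp
      _ ≤ ψM * (2 * VV t) := by
          apply mul_le_mul_of_nonneg_left h5 (le_of_lt hψMpos)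
      _ = 2 * ψM * VV t := by ring
  -- choose T
  obtain ⟨A, hAdef⟩ : ∃ x : ℝ, x = 2 * ψM * |VV 0 - K| := ⟨_, rfl⟩
  have hA0 : 0 ≤ A := by rw [hAdef]; positivity
  obtain ⟨B, hBdef⟩ : ∃ x : ℝ, x = ε ^ 2 / (A + 1) := ⟨_, rfl⟩
  have hB0 : 0 < B := by
    rw [hBdef]
    exact div_pos (by positivity) (by linarith)
  refine ⟨max 0 (-Real.log B / βd), le_max_left _ _, ?_⟩
  intro t htT
  have ht0 : 0 ≤ t := le_trans (le_max_left _ _) htT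
  have hexp : Real.exp (-βd * t) ≤ B := by
    have h1 : -Real.log B / βd ≤ t := le_trans (le_max_right _ _) htT
    have h2 : -Real.log B ≤ βd * t := by
      rw [div_le_iff₀ hβdpos] at h1
      linarith
    calc Real.exp (-βd * t) = Real.exp (-(βd * t)) := by ring_nf
      _ ≤ Real.exp (Real.log B) := Real.exp_le_exp.mpr (by linarith)
      _ = B := Real.exp_log hB0
  have htail : 2 * ψM * ((VV 0 - K) * Real.exp (-βd * t)) ≤ ε ^ 2 := by
    have h1 : (VV 0 - K) * Real.exp (-βd * t) ≤ |VV 0 - K| * Real.exp (-βd * t) :=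
      mul_le_mul_of_nonneg_right (le_abs_self _) (Real.exp_nonneg _)
    have h5 : 2 * ψM * ((VV 0 - K) * Real.exp (-βd * t)) ≤ A * Real.exp (-βd * t) := by
      calc 2 * ψM * ((VV 0 - K) * Real.exp (-βd * t))
          ≤ 2 * ψM * (|VV 0 - K| * Real.exp (-βd * t)) :=
            mul_le_mul_of_nonneg_left h1 (by linarith)
        _ = A * Real.exp (-βd * t) := by rw [hAdef]; ring
    have h2 : A * Real.exp (-βd * t) ≤ A * B := mul_le_mul_of_nonneg_left hexp hA0
    have h3 : A * B ≤ (A + 1) * B := mul_le_mul_of_nonneg_right (by linarith) hB0.le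
    have h4 : (A + 1) * B = ε ^ 2 := by
      rw [hBdef]; field_simp
    linarith
  have hzsq : z 1 t ^ 2 ≤ 2 * ψM * Wd / βd + ε ^ 2 := by
    have h1 := hz1VV t ht0
    have h2 := hVle t ht0
    have h3 : 2 * ψM * VV t ≤ 2 * ψM * (K + (VV 0 - K) * Real.exp (-βd * t)) := by
      rw [hKdef]
      exact mul_le_mul_of_nonneg_left h2 (by linarith)
    have h4 : 2 * ψM * K = 2 * ψM * Wd / βd := by
      rw [hKdef]; ring
    have h5 : 2 * ψM * (K + (VV 0 - K) * Real.exp (-βd * t))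
        = 2 * ψM * K + 2 * ψM * ((VV 0 - K) * Real.exp (-βd * t)) := by ring
    linarith only [h1, h3, h4, h5, htail]
  have habs : |z 1 t| = Real.sqrt (z 1 t ^ 2) := (Real.sqrt_sq_eq_abs _).symm
  rw [habs]
  have hKnn : 0 ≤ 2 * ψM * Wd / βd :=
    div_nonneg (mul_nonneg (by linarith) hWd0) hβdpos.le
  calc Real.sqrt (z 1 t ^ 2) ≤ Real.sqrt (2 * ψM * Wd / βd + ε ^ 2) :=
        Real.sqrt_le_sqrt hzsq
    _ ≤ Real.sqrt (2 * ψM * Wd / βd) + Real.sqrt (ε ^ 2) :=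
        sqrt_add_le_aux hKnn (sq_nonneg _)
    _ = Real.sqrt (2 * ψM * Wd / βd) + ε := by rw [Real.sqrt_sq (le_of_lt hε)]
end
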